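/- arXiv:1810.01509 — 4 statements merged into one kernel-verified Lean document; each statement's English description precedes it below -/
import Mathlib

section
/- Let P̃ = Z B Z^T be the matrix of a balanced BTSBM with K = 2^d communities of size m = n/K each, and let λ_1, …, λ_{d+1} be as given by the BTSBM eigenvalue formulas (λ_1 = m(p_0 + Σ_{r=1}^{d} 2^{r−1} p_r), λ_{q+1} = m(p_0 + Σ_{r=1}^{d−q} 2^{r−1} p_r − 2^{d−q} p_{d−q+1}) for q ∈ [d]). For each q ∈ {1,…,d} and each binary string x ∈ {0,1}^{q−1}, define ν_x^{q+1} ∈ R^n by (ν_x^{q+1})_i = 1 if c(i) has prefix x0, (ν_x^{q+1})_i = −1 if c(i) has prefix x1, and 0 otherwise. Then P̃ ν_x^{q+1} = λ_{q+1} ν_x^{q+1} for every such x, and P̃ 1_n = λ_1 1_n. Moreover, if λ_1, …, λ_{d+1}, 0 are pairwise distinct, then the eigenspace of P̃ for λ_{q+1} equals the span of {ν_x^{q+1} : x ∈ {0,1}^{q−1}} and the eigenspace for λ_1 equals the span of the all-ones vector 1_n. -/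
open Finset Matrix

namespace BTSBM

/-- 0-based index of the first coordinate where two binary strings differ. -/
noncomputable def firstDiff {d : ℕ} (x y : Fin d → Bool) : ℕ :=
  sInf {q : ℕ | ∃ h : q < d, x ⟨q, h⟩ ≠ y ⟨q, h⟩}

/-- The BTSBM community connection matrix `B`: off-diagonal entries are
`p (D x y)` where `D x y = d + 1 - s x y` and `s` is the 1-based first index of
disagreement, so that `D x y = d - firstDiff x y`; diagonal entries are `p 0`. -/
noncomputable def Bmat (d : ℕ) (p : ℕ → ℝ) :
    Matrix (Fin d → Bool) (Fin d → Bool) ℝ :=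
  Matrix.of fun x y => if x = y then p 0 else p (d - firstDiff x y)

/-- The membership matrix `Z`. -/
def Zmat (n d : ℕ) (c : Fin n → Fin d → Bool) : Matrix (Fin n) (Fin d → Bool) ℝ :=
  Matrix.of fun i x => if c i = x then 1 else 0

/-- `P̃ = Z B Zᵀ`. -/
noncomputable def Ptil (n d : ℕ) (p : ℕ → ℝ) (c : Fin n → Fin d → Bool) :
    Matrix (Fin n) (Fin n) ℝ :=
  Zmat n d c * Bmat d p * (Zmat n d c)ᵀ

/-- Every community has exactly `m` nodes. -/
def Balanced (n d m : ℕ) (c : Fin n → Fin d → Bool) : Prop :=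
  ∀ x : Fin d → Bool, (Finset.univ.filter fun i => c i = x).card = m

/-- The eigenvalue formulas `λ_{d,q}` of `B`. -/
noncomputable def lamB (d : ℕ) (p : ℕ → ℝ) (q : ℕ) : ℝ :=
  if q = 0 then p 0 + ∑ r ∈ Finset.Icc 1 d, 2 ^ (r - 1) * p r
  else p 0 + (∑ r ∈ Finset.Icc 1 (d - q), 2 ^ (r - 1) * p r) - 2 ^ (d - q) * p (d - q + 1)

/-- The vector `ν_x^{q+1}` for a binary string `x` of length `q - 1`:
`+1` on nodes whose label has prefix `x0`, `-1` on nodes whose label has prefix `x1`,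
`0` otherwise. -/
noncomputable def nuvec (n d q : ℕ) (c : Fin n → Fin d → Bool)
    (hq1 : 1 ≤ q) (hqd : q ≤ d) (x : Fin (q - 1) → Bool) : Fin n → ℝ := fun i =>
  if ∀ r : Fin (q - 1), c i (Fin.castLE (by omega) r) = x r then
    (if c i ⟨q - 1, by omega⟩ = false then 1 else -1)
  else 0

/-! ### Auxiliary development -/

/-- The "agree on the first `t` coordinates" matrix. -/
noncomputable def Emat (d t : ℕ) : Matrix (Fin d → Bool) (Fin d → Bool) ℝ :=
  Matrix.of fun z y => if ∀ r : Fin d, (r : ℕ) < t → z r = y r then 1 else 0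

/-- Total version of the `ν` vectors in community space. -/
noncomputable def nuB (d q : ℕ) (x : Fin (q - 1) → Bool) : (Fin d → Bool) → ℝ := fun y =>
  if h : 1 ≤ q ∧ q ≤ d then
    (if ∀ r : Fin (q - 1), y (Fin.castLE (by omega) r) = x r then
      (if y ⟨q - 1, by omega⟩ = false then 1 else -1) else 0)
  else 0

lemma nuvec_eq (n d q : ℕ) (c : Fin n → Fin d → Bool) (hq1 : 1 ≤ q) (hqd : q ≤ d)
    (x : Fin (q - 1) → Bool) :
    nuvec n d q c hq1 hqd x = fun i => nuB d q x (c i) := by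
  funext i
  simp only [nuvec, nuB, dif_pos (show 1 ≤ q ∧ q ≤ d from ⟨hq1, hqd⟩)]

lemma firstDiff_spec {d : ℕ} {x y : Fin d → Bool} (h : x ≠ y) :
    ∃ h' : firstDiff x y < d, x ⟨firstDiff x y, h'⟩ ≠ y ⟨firstDiff x y, h'⟩ := by
  have hne : {q : ℕ | ∃ h : q < d, x ⟨q, h⟩ ≠ y ⟨q, h⟩}.Nonempty := by
    obtain ⟨r, hr⟩ := Function.ne_iff.mp h
    exact ⟨r, r.isLt, by simpa using hr⟩
  simpa [firstDiff] using Nat.sInf_mem hne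

lemma firstDiff_min {d : ℕ} {x y : Fin d → Bool} {t : ℕ} (ht : t < firstDiff x y)
    (ht' : t < d) : x ⟨t, ht'⟩ = y ⟨t, ht'⟩ := by
  by_contra hne
  have : firstDiff x y ≤ t := Nat.sInf_le ⟨ht', hne⟩
  omega

lemma Emat_apply_of_ne {d : ℕ} {z y : Fin d → Bool} (h : z ≠ y) (t : ℕ) :
    Emat d t z y = if t ≤ firstDiff z y then 1 else 0 := by
  obtain ⟨hlt, hne⟩ := firstDiff_spec h
  by_cases ht : t ≤ firstDiff z y
  · rw [if_pos ht]
    simp only [Emat, Matrix.of_apply, if_pos]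
    rw [if_pos]
    intro r hr
    exact firstDiff_min (by omega) r.isLt
  · rw [if_neg ht]
    simp only [Emat, Matrix.of_apply]
    rw [if_neg]
    intro hall
    exact hne (hall ⟨firstDiff z y, hlt⟩ (show firstDiff z y < t by omega))

lemma Emat_self {d t : ℕ} (z : Fin d → Bool) : Emat d t z z = 1 := by
  simp [Emat]

lemma B_apply_decomp (d : ℕ) (p : ℕ → ℝ) (z y : Fin d → Bool) :
    Bmat d p z y = p 0 * (if z = y then 1 else 0)
      + ∑ t ∈ Finset.range d, p (d - t) * (Emat d t z y - Emat d (t + 1) z y) := by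
  by_cases h : z = y
  · subst h
    simp [Bmat, Emat_self]
  · have key : ∀ t ∈ Finset.range d,
        p (d - t) * (Emat d t z y - Emat d (t + 1) z y)
          = if t = firstDiff z y then p (d - firstDiff z y) else 0 := by
      intro t _
      rw [Emat_apply_of_ne h, Emat_apply_of_ne h]
      by_cases h1 : t = firstDiff z y
      · subst h1
        rw [if_pos le_rfl, if_neg (by omega), if_pos rfl]
        ring
      · by_cases h2 : t ≤ firstDiff z y
        · rw [if_pos h2, if_pos (by omega), if_neg h1]
          ring
        · rw [if_neg h2, if_neg (by omega), if_neg h1]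
          ring
    obtain ⟨hlt, -⟩ := firstDiff_spec h
    rw [Finset.sum_congr rfl key, Finset.sum_ite_eq' (Finset.range d),
      if_pos (Finset.mem_range.mpr hlt)]
    simp [Bmat, h]

lemma B_mulVec_decomp (d : ℕ) (p : ℕ → ℝ) (v : (Fin d → Bool) → ℝ) :
    (Bmat d p).mulVec v = p 0 • v
      + ∑ t ∈ Finset.range d,
          p (d - t) • ((Emat d t).mulVec v - (Emat d (t + 1)).mulVec v) := by
  funext z
  simp only [Matrix.mulVec, dotProduct, Pi.add_apply, Pi.smul_apply, Finset.sum_apply,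
    Pi.sub_apply, smul_eq_mul]
  calc ∑ y, Bmat d p z y * v y
      = ∑ y, (p 0 * ((if z = y then 1 else 0) * v y)
          + ∑ t ∈ Finset.range d, p (d - t) * ((Emat d t z y - Emat d (t + 1) z y) * v y)) := by
        refine Finset.sum_congr rfl fun y _ => ?_
        rw [B_apply_decomp, add_mul, Finset.sum_mul]
        ring_nf
    _ = p 0 * v z + ∑ t ∈ Finset.range d,
          p (d - t) * (∑ y, Emat d t z y * v y - ∑ y, Emat d (t + 1) z y * v y) := by
        rw [Finset.sum_add_distrib, ← Finset.mul_sum, Finset.sum_comm]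
        congr 1
        · congr 1
          simp [ite_mul]
        · refine Finset.sum_congr rfl fun t _ => ?_
          rw [← Finset.mul_sum]
          congr 1
          rw [← Finset.sum_sub_distrib]
          refine Finset.sum_congr rfl fun y _ => by ring

lemma card_agree (d : ℕ) (z : Fin d → Bool) {t : ℕ} (ht : t ≤ d) :
    (Finset.univ.filter fun y : Fin d → Bool => ∀ r : Fin d, (r : ℕ) < t → y r = z r).card
      = 2 ^ (d - t) := by
  have : ((Finset.univ : Finset (Fin (d - t) → Bool))).card = 2 ^ (d - t) := by
    simp
  rw [← this]
  apply Finset.card_nbij' (i := fun y (s : Fin (d - t)) => y ⟨t + s, by omega⟩)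
    (j := fun g (r : Fin d) => if h : (r : ℕ) < t then z r else g ⟨(r : ℕ) - t, by omega⟩)
  · intro a _; exact Finset.mem_univ _
  · intro g _
    simp only [Finset.mem_coe, Finset.mem_filter, Finset.mem_univ, true_and]
    intro r hr
    rw [dif_pos hr]
  · intro y hy
    simp only [Finset.mem_coe, Finset.mem_filter, Finset.mem_univ, true_and] at hy
    funext r
    by_cases hr : (r : ℕ) < t
    · dsimp only; rw [dif_pos hr]
      exact (hy r hr).symm
    · dsimp only; rw [dif_neg hr]
      refine congrArg y (Fin.ext ?_)
      simp
      omega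
  · intro g _
    funext s
    show (if h : t + (s : ℕ) < t then z _ else g ⟨t + (s : ℕ) - t, by omega⟩) = g s
    rw [dif_neg (by omega)]
    refine congrArg g (Fin.ext ?_)
    simp

lemma Emat_mulVec_of_const (d t : ℕ) (ht : t ≤ d) (v : (Fin d → Bool) → ℝ)
    (hv : ∀ z y : Fin d → Bool, (∀ r : Fin d, (r : ℕ) < t → y r = z r) → v y = v z) :
    (Emat d t).mulVec v = ((2 : ℝ) ^ (d - t)) • v := by
  funext z
  simp only [Matrix.mulVec, dotProduct, Emat, Matrix.of_apply, ite_mul, one_mul, zero_mul,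
    Pi.smul_apply, smul_eq_mul]
  rw [← Finset.sum_filter]
  have : ∀ y ∈ Finset.univ.filter fun y : Fin d → Bool =>
      ∀ r : Fin d, (r : ℕ) < t → z r = y r, v y = v z := by
    intro y hy
    simp only [Finset.mem_filter, Finset.mem_univ, true_and] at hy
    exact hv z y fun r hr => (hy r hr).symm
  rw [Finset.sum_congr rfl this, Finset.sum_const]
  have hcard : (Finset.univ.filter fun y : Fin d → Bool =>
      ∀ r : Fin d, (r : ℕ) < t → z r = y r).card = 2 ^ (d - t) := by
    rw [← card_agree d z ht]
    congr 1
    ext y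
    simp only [Finset.mem_filter, Finset.mem_univ, true_and]
    constructor <;> intro h r hr <;> exact (h r hr).symm
  rw [hcard, nsmul_eq_mul]
  push_cast
  ring

lemma Emat_mulVec_nuB_high (d q t : ℕ) (hq1 : 1 ≤ q) (hqd : q ≤ d)
    (x : Fin (q - 1) → Bool) (hqt : q ≤ t) (htd : t ≤ d) :
    (Emat d t).mulVec (nuB d q x) = ((2 : ℝ) ^ (d - t)) • nuB d q x := by
  apply Emat_mulVec_of_const d t htd
  intro z y hagree
  have h1 : ∀ r : Fin (q - 1), y (Fin.castLE (by omega) r) = z (Fin.castLE (by omega) r) := by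
    intro r
    exact hagree _ (lt_of_lt_of_le r.isLt (by omega))
  have h2 : y ⟨q - 1, by omega⟩ = z ⟨q - 1, by omega⟩ :=
    hagree ⟨q - 1, by omega⟩ (show q - 1 < t by omega)
  simp only [nuB, dif_pos (show 1 ≤ q ∧ q ≤ d from ⟨hq1, hqd⟩)]
  have hC : (∀ r : Fin (q - 1), y (Fin.castLE (by omega) r) = x r)
      ↔ (∀ r : Fin (q - 1), z (Fin.castLE (by omega) r) = x r) := by
    constructor <;> intro h r
    · rw [← h1 r]; exact h r
    · rw [h1 r]; exact h r
  rw [if_congr hC (by rw [h2]) rfl]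

lemma Emat_mulVec_nuB_low (d q t : ℕ) (hq1 : 1 ≤ q) (hqd : q ≤ d)
    (x : Fin (q - 1) → Bool) (htq : t < q) :
    (Emat d t).mulVec (nuB d q x) = 0 := by
  funext z
  simp only [Matrix.mulVec, dotProduct, Pi.zero_apply]
  set j : Fin d := ⟨q - 1, by omega⟩ with hj
  apply Finset.sum_ninvolution (g := fun y => Function.update y j (! y j))
  · intro y
    have hE : Emat d t z (Function.update y j (! y j)) = Emat d t z y := by
      simp only [Emat, Matrix.of_apply]
      refine if_congr (forall_congr' fun r => imp_congr_right fun hr => ?_) rfl rfl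
      rw [Function.update_of_ne (by intro hrj; rw [hrj] at hr; simp [hj] at hr; omega)]
    have hnu : nuB d q x (Function.update y j (! y j)) = - nuB d q x y := by
      simp only [nuB, dif_pos (show 1 ≤ q ∧ q ≤ d from ⟨hq1, hqd⟩)]
      have hcond : (∀ r : Fin (q - 1),
          Function.update y j (! y j) (Fin.castLE (by omega) r) = x r)
          ↔ (∀ r : Fin (q - 1), y (Fin.castLE (by omega) r) = x r) := by
        refine forall_congr' fun r => ?_
        rw [Function.update_of_ne (by
          intro hrj
          have : ((Fin.castLE (by omega) r : Fin d) : ℕ) = q - 1 := by rw [hrj]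
          simp [Fin.castLE] at this
          omega)]
      rw [if_congr hcond rfl rfl]
      by_cases hc : ∀ r : Fin (q - 1), y (Fin.castLE (by omega) r) = x r
      · rw [if_pos hc, if_pos hc, Function.update_self]
        cases hyj : y j <;> simp [hyj]
      · rw [if_neg hc, if_neg hc, neg_zero]
    rw [hE, hnu]
    ring
  · intro y _
    intro heq
    have := congrFun heq j
    rw [Function.update_self] at this
    cases y j <;> simp_all
  · intro y; exact Finset.mem_univ _
  · intro y
    funext r
    by_cases hr : r = j
    · subst hr
      simp [Function.update_self]
    · simp [Function.update_of_ne hr]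

lemma Emat_mulVec_one (d t : ℕ) (ht : t ≤ d) :
    (Emat d t).mulVec (fun _ => (1 : ℝ)) = ((2 : ℝ) ^ (d - t)) • (fun _ => (1 : ℝ)) :=
  Emat_mulVec_of_const d t ht _ fun _ _ _ => rfl

lemma sum_reindex (d a : ℕ) (p : ℕ → ℝ) :
    ∑ t ∈ Finset.Ico a d, (2 : ℝ) ^ (d - t - 1) * p (d - t)
      = ∑ r ∈ Finset.Icc 1 (d - a), (2 : ℝ) ^ (r - 1) * p r := by
  apply Finset.sum_nbij' (i := fun t => d - t) (j := fun r => d - r)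
  · intro t htm
    simp only [Finset.mem_Ico] at htm
    simp only [Finset.mem_Icc]
    omega
  · intro r hrm
    simp only [Finset.mem_Icc] at hrm
    simp only [Finset.mem_Ico]
    omega
  · intro t htm
    simp only [Finset.mem_Ico] at htm
    omega
  · intro r hrm
    simp only [Finset.mem_Icc] at hrm
    omega
  · intro t _
    rfl

lemma B_mulVec_nuB (d q : ℕ) (p : ℕ → ℝ) (hq1 : 1 ≤ q) (hqd : q ≤ d)
    (x : Fin (q - 1) → Bool) :
    (Bmat d p).mulVec (nuB d q x) = lamB d p q • nuB d q x := by
  rw [B_mulVec_decomp]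
  have key : ∀ t ∈ Finset.range d,
      p (d - t) • ((Emat d t).mulVec (nuB d q x) - (Emat d (t + 1)).mulVec (nuB d q x))
        = ((if t = q - 1 then -((2 : ℝ) ^ (d - q)) * p (d - q + 1) else 0)
            + (if q ≤ t then (2 : ℝ) ^ (d - t - 1) * p (d - t) else 0)) • nuB d q x := by
    intro t ht
    rw [Finset.mem_range] at ht
    by_cases h1 : t = q - 1
    · have htq : t < q := by omega
      rw [Emat_mulVec_nuB_low d q t hq1 hqd x htq,
        Emat_mulVec_nuB_high d q (t + 1) hq1 hqd x (by omega) (by omega)]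
      rw [if_pos h1, if_neg (by omega), add_zero, zero_sub, smul_neg, smul_smul, ← neg_smul]
      congr 1
      have e1 : d - (t + 1) = d - q := by omega
      have e2 : d - t = d - q + 1 := by omega
      rw [e1, e2]
      ring
    · by_cases h2 : q ≤ t
      · rw [Emat_mulVec_nuB_high d q t hq1 hqd x h2 (by omega),
          Emat_mulVec_nuB_high d q (t + 1) hq1 hqd x (by omega) (by omega)]
        rw [if_neg h1, if_pos h2, zero_add, ← sub_smul, smul_smul]
        congr 1
        have e1 : d - (t + 1) = d - t - 1 := by omega
        have e2 : (2 : ℝ) ^ (d - t) = 2 * 2 ^ (d - t - 1) := by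
          rw [← pow_succ']
          congr 1
          omega
        rw [e1, e2]
        ring
      · rw [Emat_mulVec_nuB_low d q t hq1 hqd x (by omega),
          Emat_mulVec_nuB_low d q (t + 1) hq1 hqd x (by omega)]
        rw [if_neg h1, if_neg h2]
        simp
  rw [Finset.sum_congr rfl key, ← Finset.sum_smul, ← add_smul]
  congr 1
  rw [Finset.sum_add_distrib]
  have hfirst : ∑ t ∈ Finset.range d,
      (if t = q - 1 then -((2 : ℝ) ^ (d - q)) * p (d - q + 1) else 0)
        = -((2 : ℝ) ^ (d - q)) * p (d - q + 1) := by
    rw [Finset.sum_ite_eq' (Finset.range d), if_pos (Finset.mem_range.mpr (by omega))]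
  have hsecond : ∑ t ∈ Finset.range d, (if q ≤ t then (2 : ℝ) ^ (d - t - 1) * p (d - t) else 0)
      = ∑ r ∈ Finset.Icc 1 (d - q), (2 : ℝ) ^ (r - 1) * p r := by
    rw [← Finset.sum_filter, ← sum_reindex d q p]
    apply Finset.sum_congr _ fun _ _ => rfl
    ext t
    simp only [Finset.mem_filter, Finset.mem_range, Finset.mem_Ico]
    omega
  rw [hfirst, hsecond, lamB, if_neg (by omega)]
  ring

lemma B_mulVec_one (d : ℕ) (p : ℕ → ℝ) :
    (Bmat d p).mulVec (fun _ => (1 : ℝ)) = lamB d p 0 • (fun _ => (1 : ℝ)) := by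
  rw [B_mulVec_decomp]
  have key : ∀ t ∈ Finset.range d,
      p (d - t) • ((Emat d t).mulVec (fun _ => (1 : ℝ))
          - (Emat d (t + 1)).mulVec (fun _ => (1 : ℝ)))
        = ((2 : ℝ) ^ (d - t - 1) * p (d - t)) • (fun _ => (1 : ℝ)) := by
    intro t ht
    rw [Finset.mem_range] at ht
    rw [Emat_mulVec_one d t (by omega), Emat_mulVec_one d (t + 1) (by omega),
      ← sub_smul, smul_smul]
    congr 1
    have e1 : d - (t + 1) = d - t - 1 := by omega
    have e2 : (2 : ℝ) ^ (d - t) = 2 * 2 ^ (d - t - 1) := by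
      rw [← pow_succ']
      congr 1
      omega
    rw [e1, e2]
    ring
  rw [Finset.sum_congr rfl key, ← Finset.sum_smul, ← add_smul]
  congr 1
  have : ∑ t ∈ Finset.range d, (2 : ℝ) ^ (d - t - 1) * p (d - t)
      = ∑ r ∈ Finset.Icc 1 d, (2 : ℝ) ^ (r - 1) * p r := by
    rw [← Nat.Ico_zero_eq_range, sum_reindex d 0 p, Nat.sub_zero]
  rw [this, lamB, if_pos rfl]

/-! ### Spanning -/

/-- Prefix of `z` of length `q - 1`. -/
noncomputable def xOf (d : ℕ) (z : Fin d → Bool) (q : ℕ) : Fin (q - 1) → Bool := fun r =>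
  if h : (r : ℕ) < d then z ⟨r, h⟩ else false

lemma nuB_mul (d q : ℕ) (hq1 : 1 ≤ q) (hqd : q ≤ d) (z y : Fin d → Bool) :
    nuB d q (xOf d z q) z * nuB d q (xOf d z q) y
      = 2 * Emat d q z y - Emat d (q - 1) z y := by
  have hq1d : q - 1 < d := by omega
  simp only [nuB, dif_pos (show 1 ≤ q ∧ q ≤ d from ⟨hq1, hqd⟩)]
  have hxz : ∀ w : Fin d → Bool,
      (∀ r : Fin (q - 1), w (Fin.castLE (by omega) r) = xOf d z q r)
        ↔ (∀ r : Fin d, (r : ℕ) < q - 1 → w r = z r) := by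
    intro w
    constructor
    · intro h r hr
      have := h ⟨(r : ℕ), hr⟩
      rw [xOf, dif_pos (by omega)] at this
      convert this using 2 <;> simp [Fin.castLE]
    · intro h r
      rw [xOf, dif_pos (by omega : (r : ℕ) < d)]
      exact h _ (by simp [Fin.castLE])
  have hzc : ∀ r : Fin (q - 1), z (Fin.castLE (by omega) r) = xOf d z q r := by
    rw [hxz]; intro r _; rfl
  rw [if_pos hzc]
  have hEq : Emat d q z y = if (∀ r : Fin d, (r : ℕ) < q - 1 → y r = z r)
      ∧ y ⟨q - 1, hq1d⟩ = z ⟨q - 1, hq1d⟩ then 1 else 0 := by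
    simp only [Emat, Matrix.of_apply]
    refine if_congr ?_ rfl rfl
    constructor
    · intro h
      exact ⟨fun r hr => (h r (by omega)).symm, (h ⟨q - 1, hq1d⟩ (by simp; omega)).symm⟩
    · rintro ⟨h1, h2⟩ r hr
      rcases Nat.lt_or_ge (r : ℕ) (q - 1) with hr' | hr'
      · exact (h1 r hr').symm
      · have : r = ⟨q - 1, hq1d⟩ := by ext; simp at hr ⊢; omega
        rw [this]; exact h2.symm
  have hEq1 : Emat d (q - 1) z y
      = if (∀ r : Fin d, (r : ℕ) < q - 1 → y r = z r) then 1 else 0 := by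
    simp only [Emat, Matrix.of_apply]
    refine if_congr ?_ rfl rfl
    constructor <;> intro h r hr <;> exact (h r hr).symm
  rw [hEq, hEq1]
  by_cases hA : ∀ r : Fin d, (r : ℕ) < q - 1 → y r = z r
  · rw [if_pos ((hxz y).mpr hA)]
    cases hz' : z ⟨q - 1, hq1d⟩ <;> cases hy' : y ⟨q - 1, hq1d⟩ <;>
      simp [hz', hy', iff_true_intro hA] <;> norm_num
  · rw [if_neg (show ¬(∀ r : Fin (q - 1), y (Fin.castLE (by omega) r) = xOf d z q r)
      from fun h => hA ((hxz y).mp h))]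
    simp [hA]

lemma delta_decomp (d : ℕ) (z : Fin d → Bool) :
    (fun y => if z = y then (1 : ℝ) else 0)
      = ((2 : ℝ) ^ d)⁻¹ • (fun _ => (1 : ℝ))
        + ∑ t ∈ Finset.range d,
            ((2 : ℝ) ^ t / 2 ^ d * nuB d (t + 1) (xOf d z (t + 1)) z)
              • nuB d (t + 1) (xOf d z (t + 1)) := by
  funext y
  simp only [Pi.add_apply, Pi.smul_apply, Finset.sum_apply, smul_eq_mul, mul_one]
  have key : ∀ t ∈ Finset.range d,
      (2 : ℝ) ^ t / 2 ^ d * nuB d (t + 1) (xOf d z (t + 1)) z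
          * nuB d (t + 1) (xOf d z (t + 1)) y
        = (fun s => (2 : ℝ) ^ s / 2 ^ d * Emat d s z y) (t + 1)
            - (fun s => (2 : ℝ) ^ s / 2 ^ d * Emat d s z y) t := by
    intro t ht
    rw [Finset.mem_range] at ht
    rw [mul_assoc, nuB_mul d (t + 1) (by omega) (by omega) z y]
    simp only [Nat.add_sub_cancel]
    rw [pow_succ]
    ring
  rw [Finset.sum_congr rfl key, Finset.sum_range_sub
    (f := fun s => (2 : ℝ) ^ s / 2 ^ d * Emat d s z y)]
  have hE0 : Emat d 0 z y = 1 := by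
    simp [Emat]
  have hEd : Emat d d z y = if z = y then 1 else 0 := by
    simp only [Emat, Matrix.of_apply]
    refine if_congr ?_ rfl rfl
    constructor
    · intro h; funext r; exact h r r.isLt
    · rintro rfl r _; rfl
  rw [hE0, hEd]
  have h2d : (2 : ℝ) ^ d ≠ 0 := by positivity
  rw [pow_zero, div_self h2d]
  by_cases h : z = y <;> simp [h] <;> field_simp

/-- The candidate eigenspace spans in community space. -/
noncomputable def Wspan (d : ℕ) : ℕ → Submodule ℝ ((Fin d → Bool) → ℝ) := fun q =>
  if q = 0 then Submodule.span ℝ {v | v = fun _ => (1 : ℝ)}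
  else if q ≤ d then Submodule.span ℝ {v | ∃ x : Fin (q - 1) → Bool, v = nuB d q x}
  else ⊥

lemma Wspan_le_eigenspace (d : ℕ) (p : ℕ → ℝ) (q : ℕ) (hq : q ≤ d) :
    Wspan d q ≤ Module.End.eigenspace (Matrix.toLin' (Bmat d p)) (lamB d p q) := by
  rcases Nat.eq_zero_or_pos q with h0 | h0
  · subst h0
    rw [Wspan, if_pos rfl, Submodule.span_le]
    rintro v rfl
    rw [SetLike.mem_coe, Module.End.mem_eigenspace_iff, Matrix.toLin'_apply]
    exact B_mulVec_one d p
  · rw [Wspan, if_neg (by omega), if_pos hq, Submodule.span_le]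
    rintro v ⟨x, rfl⟩
    rw [SetLike.mem_coe, Module.End.mem_eigenspace_iff, Matrix.toLin'_apply]
    exact B_mulVec_nuB d q p h0 hq x

lemma mem_iSup_Wspan (d : ℕ) (v : (Fin d → Bool) → ℝ) : v ∈ ⨆ q, Wspan d q := by
  have hsingle : ∀ z : Fin d → Bool,
      (fun y => if z = y then (1 : ℝ) else 0) ∈ ⨆ q, Wspan d q := by
    intro z
    rw [delta_decomp]
    apply Submodule.add_mem
    · apply Submodule.mem_iSup_of_mem 0
      rw [Wspan, if_pos rfl]
      exact Submodule.smul_mem _ _ (Submodule.subset_span rfl)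
    · apply Submodule.sum_mem
      intro t ht
      rw [Finset.mem_range] at ht
      apply Submodule.mem_iSup_of_mem (t + 1)
      rw [Wspan, if_neg (by omega), if_pos (by omega)]
      exact Submodule.smul_mem _ _ (Submodule.subset_span ⟨xOf d z (t + 1), rfl⟩)
  rw [pi_eq_sum_univ v]
  apply Submodule.sum_mem
  intro z _
  exact Submodule.smul_mem _ _ (hsingle z)

lemma mem_Wspan (d : ℕ) (p : ℕ → ℝ)
    (hBdist : ∀ q₁ q₂, q₁ ≤ d → q₂ ≤ d → q₁ ≠ q₂ → lamB d p q₁ ≠ lamB d p q₂)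
    (q : ℕ) (hq : q ≤ d) (g : (Fin d → Bool) → ℝ)
    (hg : (Bmat d p).mulVec g = lamB d p q • g) : g ∈ Wspan d q := by
  classical
  set T := Matrix.toLin' (Bmat d p)
  have hmem := mem_iSup_Wspan d g
  rw [Submodule.mem_iSup_iff_exists_finsupp] at hmem
  obtain ⟨f, hf, hsum⟩ := hmem
  have hsplit : (f.sum fun _ x => x) = f q + ∑ i ∈ f.support.erase q, f i := by
    by_cases hqs : q ∈ f.support
    · rw [Finsupp.sum, ← Finset.add_sum_erase _ _ hqs]
    · rw [Finsupp.sum, Finset.erase_eq_of_notMem hqs,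
        Finsupp.notMem_support_iff.mp hqs, zero_add]
  have hrest : g - f q ∈ ⨆ (μ : ℝ) (_ : μ ≠ lamB d p q), Module.End.eigenspace T μ := by
    have : g - f q = ∑ i ∈ f.support.erase q, f i := by
      rw [← hsum, hsplit, add_sub_cancel_left]
    rw [this]
    apply Submodule.sum_mem
    intro i hi
    have hiq : i ≠ q := Finset.ne_of_mem_erase hi
    have hid : i ≤ d := by
      by_contra hid
      have hW : Wspan d i = ⊥ := by rw [Wspan, if_neg (by omega), if_neg (by omega)]
      have := hf i
      rw [hW, Submodule.mem_bot] at this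
      exact Finsupp.mem_support_iff.mp (Finset.mem_of_mem_erase hi) this
    exact Submodule.mem_iSup_of_mem (lamB d p i)
      (Submodule.mem_iSup_of_mem (hBdist i q hid hq hiq)
        (Wspan_le_eigenspace d p i hid (hf i)))
  have hself : g - f q ∈ Module.End.eigenspace T (lamB d p q) := by
    apply Submodule.sub_mem
    · rw [Module.End.mem_eigenspace_iff, Matrix.toLin'_apply]
      exact hg
    · exact Wspan_le_eigenspace d p q hq (hf q)
  have hdisj := Module.End.eigenspaces_iSupIndep T (lamB d p q)
  have : g - f q = 0 := by
    rw [← Submodule.mem_bot (R := ℝ)]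
    exact (disjoint_iff.mp hdisj) ▸ Submodule.mem_inf.mpr ⟨hself, hrest⟩
  have : g = f q := by
    have := sub_eq_zero.mp this
    exact this
  rw [this]
  exact hf q

/-! ### Lifting to node space -/

lemma Ptil_apply (n d : ℕ) (p : ℕ → ℝ) (c : Fin n → Fin d → Bool) (i j : Fin n) :
    Ptil n d p c i j = Bmat d p (c i) (c j) := by
  simp only [Ptil, Matrix.mul_apply, Matrix.transpose_apply, Zmat, Matrix.of_apply,
    ite_mul, one_mul, zero_mul, mul_ite, mul_one, mul_zero]
  simp [Finset.sum_ite_eq]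

lemma sum_fiber (n d m : ℕ) (c : Fin n → Fin d → Bool) (hbal : Balanced n d m c)
    (F : (Fin d → Bool) → ℝ) :
    ∑ j : Fin n, F (c j) = ∑ y : Fin d → Bool, (m : ℝ) * F y := by
  classical
  rw [← Finset.sum_fiberwise' Finset.univ c F]
  refine Finset.sum_congr rfl fun y _ => ?_
  rw [Finset.sum_const, hbal y, nsmul_eq_mul]

lemma Ptil_mulVec_lift (n d m : ℕ) (p : ℕ → ℝ) (c : Fin n → Fin d → Bool)
    (hbal : Balanced n d m c) (g : (Fin d → Bool) → ℝ) :
    (Ptil n d p c).mulVec (fun i => g (c i))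
      = fun i => (m : ℝ) * (Bmat d p).mulVec g (c i) := by
  funext i
  simp only [Matrix.mulVec, dotProduct]
  calc ∑ j, Ptil n d p c i j * g (c j)
      = ∑ j, (fun y => Bmat d p (c i) y * g y) (c j) := by
        refine Finset.sum_congr rfl fun j _ => by rw [Ptil_apply]
    _ = ∑ y, (m : ℝ) * (Bmat d p (c i) y * g y) :=
        sum_fiber n d m c hbal (fun y => Bmat d p (c i) y * g y)
    _ = (m : ℝ) * ∑ y, Bmat d p (c i) y * g y := by rw [Finset.mul_sum]

theorem statement1 (d m : ℕ) (hd : 1 ≤ d) (hm : 0 < m)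
    (p : ℕ → ℝ) (hp : ∀ r ≤ d, p r ∈ Set.Icc (0:ℝ) 1)
    (n : ℕ) (hn : n = 2 ^ d * m)
    (c : Fin n → Fin d → Bool) (hbal : Balanced n d m c) :
    -- (a) each ν_x^{q+1} is an eigenvector of P̃ for the eigenvalue λ_{q+1} = m λ_{d,q}
    (∀ q (hq1 : 1 ≤ q) (hqd : q ≤ d) (x : Fin (q - 1) → Bool),
        (Ptil n d p c).mulVec (nuvec n d q c hq1 hqd x)
          = ((m : ℝ) * lamB d p q) • nuvec n d q c hq1 hqd x)
    -- (b) the all-ones vector is an eigenvector for λ_1 = m λ_{d,0}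
    ∧ (Ptil n d p c).mulVec (fun _ => (1 : ℝ))
        = ((m : ℝ) * lamB d p 0) • (fun _ => (1 : ℝ))
    -- (c) if λ_1, …, λ_{d+1}, 0 are pairwise distinct then the eigenspaces are as stated
    ∧ ((∀ q₁ q₂, q₁ ≤ d → q₂ ≤ d → q₁ ≠ q₂ →
            (m : ℝ) * lamB d p q₁ ≠ (m : ℝ) * lamB d p q₂) →
       (∀ q ≤ d, (m : ℝ) * lamB d p q ≠ 0) →
       (∀ q (hq1 : 1 ≤ q) (hqd : q ≤ d),
          Module.End.eigenspace (Matrix.toLin' (Ptil n d p c)) ((m : ℝ) * lamB d p q)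
            = Submodule.span ℝ
                {v : Fin n → ℝ | ∃ x : Fin (q - 1) → Bool, v = nuvec n d q c hq1 hqd x})
        ∧ Module.End.eigenspace (Matrix.toLin' (Ptil n d p c)) ((m : ℝ) * lamB d p 0)
            = Submodule.span ℝ {v : Fin n → ℝ | v = fun _ => (1 : ℝ)}) := by
  classical
  have hsurj : ∀ y : Fin d → Bool, ∃ i, c i = y := by
    intro y
    have hpos : 0 < (Finset.univ.filter fun i => c i = y).card := by
      rw [hbal y]; exact hm
    obtain ⟨i, hi⟩ := Finset.card_pos.mp hpos
    exact ⟨i, (Finset.mem_filter.mp hi).2⟩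
  have parta : ∀ q (hq1 : 1 ≤ q) (hqd : q ≤ d) (x : Fin (q - 1) → Bool),
      (Ptil n d p c).mulVec (nuvec n d q c hq1 hqd x)
        = ((m : ℝ) * lamB d p q) • nuvec n d q c hq1 hqd x := by
    intro q hq1 hqd x
    rw [nuvec_eq, Ptil_mulVec_lift n d m p c hbal, B_mulVec_nuB d q p hq1 hqd x]
    funext i
    simp [mul_assoc]
  have partb : (Ptil n d p c).mulVec (fun _ => (1 : ℝ))
      = ((m : ℝ) * lamB d p 0) • (fun _ => (1 : ℝ)) := by
    have h1 : (Ptil n d p c).mulVec (fun i => (fun _ => (1 : ℝ)) (c i))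
        = fun i => (m : ℝ) * (Bmat d p).mulVec (fun _ => (1 : ℝ)) (c i) :=
      Ptil_mulVec_lift n d m p c hbal (fun _ => (1 : ℝ))
    rw [B_mulVec_one] at h1
    rw [show (fun _ : Fin n => (1 : ℝ)) = fun i => (fun _ : Fin d → Bool => (1 : ℝ)) (c i)
      from rfl, h1]
    funext i
    simp [mul_assoc]
  refine ⟨parta, partb, ?_⟩
  intro hdist hne0
  have hm0 : (m : ℝ) ≠ 0 := Nat.cast_ne_zero.mpr (by omega)
  have hBdist : ∀ q₁ q₂, q₁ ≤ d → q₂ ≤ d → q₁ ≠ q₂ → lamB d p q₁ ≠ lamB d p q₂ := by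
    intro q1 q2 h1 h2 hne heq
    exact hdist q1 q2 h1 h2 hne (by rw [heq])
  have hkey : ∀ q, q ≤ d → ∀ v : Fin n → ℝ,
      v ∈ Module.End.eigenspace (Matrix.toLin' (Ptil n d p c)) ((m : ℝ) * lamB d p q) →
      ∃ g, g ∈ Wspan d q ∧ v = fun i => g (c i) := by
    intro q hq v hv
    rw [Module.End.mem_eigenspace_iff, Matrix.toLin'_apply] at hv
    set μ := (m : ℝ) * lamB d p q with hμ
    have hμ0 : μ ≠ 0 := hne0 q hq
    set g : (Fin d → Bool) → ℝ := fun y => μ⁻¹ * ∑ j, Bmat d p y (c j) * v j with hg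
    have hvg : v = fun i => g (c i) := by
      funext i
      have h1 := congrFun hv i
      simp only [Matrix.mulVec, dotProduct, Pi.smul_apply, smul_eq_mul] at h1
      have h2 : ∑ j, Ptil n d p c i j * v j = ∑ j, Bmat d p (c i) (c j) * v j :=
        Finset.sum_congr rfl fun j _ => by rw [Ptil_apply]
      rw [h2] at h1
      rw [hg]
      simp only
      rw [h1]
      field_simp
    have hB : (Bmat d p).mulVec g = lamB d p q • g := by
      have h1 : (Ptil n d p c).mulVec (fun i => g (c i)) = μ • fun i => g (c i) := by
        rw [← hvg]; exact hv
      rw [Ptil_mulVec_lift n d m p c hbal] at h1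
      funext y
      obtain ⟨i, hi⟩ := hsurj y
      have h2 := congrFun h1 i
      simp only [Pi.smul_apply, smul_eq_mul] at h2
      rw [hi] at h2
      simp only [Pi.smul_apply, smul_eq_mul]
      refine mul_left_cancel₀ hm0 ?_
      rw [h2, hμ]
      ring
    exact ⟨g, mem_Wspan d p hBdist q hq g hB, hvg⟩
  constructor
  · intro q hq1 hqd
    apply le_antisymm
    · intro v hv
      obtain ⟨g, hgW, rfl⟩ := hkey q hqd v hv
      rw [Wspan, if_neg (by omega), if_pos hqd] at hgW
      have himg := Submodule.apply_mem_span_image_of_mem_span (LinearMap.funLeft ℝ ℝ c) hgW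
      refine Submodule.span_mono ?_ himg
      rintro w ⟨u, ⟨x, rfl⟩, rfl⟩
      exact ⟨x, by rw [nuvec_eq]; rfl⟩
    · rw [Submodule.span_le]
      rintro v ⟨x, rfl⟩
      rw [SetLike.mem_coe, Module.End.mem_eigenspace_iff, Matrix.toLin'_apply]
      exact parta q hq1 hqd x
  · apply le_antisymm
    · intro v hv
      obtain ⟨g, hgW, rfl⟩ := hkey 0 (by omega) v hv
      rw [Wspan, if_pos rfl] at hgW
      have himg := Submodule.apply_mem_span_image_of_mem_span (LinearMap.funLeft ℝ ℝ c) hgW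
      refine Submodule.span_mono ?_ himg
      rintro w ⟨u, rfl, rfl⟩
      rfl
    · rw [Submodule.span_le]
      rintro v rfl
      rw [SetLike.mem_coe, Module.End.mem_eigenspace_iff, Matrix.toLin'_apply]
      exact partb

end BTSBM
end

section
/- Let B_d be the K×K connection-probability matrix of a BTSBM with K = 2^d and parameters p_0, …, p_d. Let U_1 = (1/√2)[[1,1],[1,−1]] and let U_1^{⊗d} denote its d-fold Kronecker power, which equals H_K / 2^{d/2} where H_K is the standard K×K Hadamard matrix; U_1^{⊗d} is symmetric and orthogonal. Define λ_{d,0} = p_0 + Σ_{r=1}^{d} 2^{r−1} p_r and λ_{d,q} = p_0 + Σ_{r=1}^{d−q} 2^{r−1} p_r − 2^{d−q} p_{d−q+1} for q ∈ [d]. Let Λ_d be the K×K diagonal matrix with Λ_{d,11} = λ_{d,0} and Λ_{d,ii} = λ_{d, d − ord_2(i−1)} for i > 1, where ord_2(m) = max{q : 2^q divides m}. Then B_d = U_1^{⊗d} Λ_d U_1^{⊗d}. -/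
open Finset Matrix

namespace BTSBM

/-- The `d`-fold Kronecker power of `U₁ = (1/√2)[[1,1],[1,−1]]`, indexed by binary
strings: its `(x, y)` entry is `2^{-d/2} (−1)^{⟨x,y⟩}`.  It equals `H_K / 2^{d/2}`
where `H_K` is the standard `K×K` Hadamard matrix, `K = 2^d`. -/
noncomputable def Umat (d : ℕ) : Matrix (Fin d → Bool) (Fin d → Bool) ℝ :=
  Matrix.of fun x y =>
    (∏ q : Fin d, (if x q = true ∧ y q = true then (-1 : ℝ) else 1)) / (Real.sqrt 2) ^ d

/-- The integer (in `{0, 1, …, 2^d − 1}`) whose binary representation is the string `x`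
(first coordinate = most significant bit); the community index is `I(x) = strVal x + 1`. -/
def strVal (d : ℕ) (x : Fin d → Bool) : ℕ :=
  ∑ q : Fin d, if x q = true then 2 ^ (d - 1 - (q : ℕ)) else 0

/-- The diagonal matrix `Λ_d`: its entry at community index `i = strVal x + 1` is
`λ_{d,0}` if `i = 1` and `λ_{d, d - ord₂(i−1)}` if `i > 1`. -/
noncomputable def LamMat (d : ℕ) (p : ℕ → ℝ) : Matrix (Fin d → Bool) (Fin d → Bool) ℝ :=
  Matrix.diagonal fun x =>
    if strVal d x = 0 then lamB d p 0 else lamB d p (d - padicValNat 2 (strVal d x))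

noncomputable def eps (a b : Bool) : ℝ := if a = true ∧ b = true then -1 else 1

noncomputable def chi {d : ℕ} (x y : Fin d → Bool) : ℝ := ∏ q, eps (x q) (y q)

lemma eps_comm (a b : Bool) : eps a b = eps b a := by
  cases a <;> cases b <;> simp [eps]

lemma eps_xor (a b c : Bool) : eps (xor a b) c = eps a c * eps b c := by
  cases a <;> cases b <;> cases c <;> norm_num [eps]

lemma eps_false_left (c : Bool) : eps false c = 1 := by cases c <;> simp [eps]

lemma sum_eps_mul (a c : Bool) : ∑ b : Bool, eps a b * eps b c = if a = c then 2 else 0 := by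
  cases a <;> cases c <;> norm_num [eps, Fintype.sum_bool]

lemma sum_eps (c : Bool) : ∑ b : Bool, eps b c = if c = false then 2 else 0 := by
  cases c <;> norm_num [eps, Fintype.sum_bool]

lemma chi_comm {d : ℕ} (x y : Fin d → Bool) : chi x y = chi y x :=
  Finset.prod_congr rfl fun q _ => eps_comm _ _

lemma chi_xor {d : ℕ} (x w y : Fin d → Bool) :
    chi (fun q => xor (x q) (w q)) y = chi x y * chi w y := by
  unfold chi
  rw [← Finset.prod_mul_distrib]
  exact Finset.prod_congr rfl fun q _ => eps_xor _ _ _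

lemma sum_chi_mul {d : ℕ} (x y : Fin d → Bool) :
    ∑ z : Fin d → Bool, chi x z * chi z y = if x = y then (2:ℝ)^d else 0 := by
  have h1 : ∀ z : Fin d → Bool, chi x z * chi z y
      = ∏ q, (eps (x q) (z q) * eps (z q) (y q)) :=
    fun z => (Finset.prod_mul_distrib).symm
  calc ∑ z : Fin d → Bool, chi x z * chi z y
      = ∑ z ∈ Fintype.piFinset (fun _ : Fin d => (univ : Finset Bool)),
          ∏ q, (eps (x q) (z q) * eps (z q) (y q)) := by
        rw [Fintype.piFinset_univ]; exact Finset.sum_congr rfl fun z _ => h1 z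
    _ = ∏ q : Fin d, ∑ b : Bool, eps (x q) b * eps b (y q) :=
        (Finset.prod_univ_sum (fun _ : Fin d => (univ : Finset Bool))
          (fun q b => eps (x q) b * eps b (y q))).symm
    _ = ∏ q : Fin d, (if x q = y q then (2:ℝ) else 0) :=
        Finset.prod_congr rfl fun q _ => sum_eps_mul _ _
    _ = if x = y then (2:ℝ)^d else 0 := by
        by_cases h : x = y
        · subst h
          simp [Finset.prod_const, Finset.card_univ]
        · obtain ⟨q, hq⟩ := Function.ne_iff.mp h
          rw [if_neg h]
          exact Finset.prod_eq_zero (mem_univ q) (by simp [hq])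

lemma sum_chi {d : ℕ} (y : Fin d → Bool) :
    ∑ w : Fin d → Bool, chi w y = if y = (fun _ => false) then (2:ℝ)^d else 0 := by
  calc ∑ w : Fin d → Bool, chi w y
      = ∑ w ∈ Fintype.piFinset (fun _ : Fin d => (univ : Finset Bool)),
          ∏ q, eps (w q) (y q) := by rw [Fintype.piFinset_univ]; rfl
    
    _ = ∏ q : Fin d, ∑ b : Bool, eps b (y q) :=
        (Finset.prod_univ_sum (fun _ : Fin d => (univ : Finset Bool))
          (fun q b => eps b (y q))).symm
    _ = ∏ q : Fin d, (if y q = false then (2:ℝ) else 0) :=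
        Finset.prod_congr rfl fun q _ => sum_eps _
    _ = if y = (fun _ => false) then (2:ℝ)^d else 0 := by
        by_cases h : y = (fun _ => false)
        · subst h; simp [Finset.prod_const, Finset.card_univ]
        · obtain ⟨q, hq⟩ := Function.ne_iff.mp h
          rw [if_neg h]
          exact Finset.prod_eq_zero (mem_univ q) (by simp [hq])

lemma Umat_apply (d : ℕ) (x y : Fin d → Bool) :
    Umat d x y = chi x y / (Real.sqrt 2)^d := by
  simp only [Umat, Matrix.of_apply, chi, eps]

lemma sqrt_two_pow_mul (d : ℕ) : (Real.sqrt 2)^d * (Real.sqrt 2)^d = 2^d := by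
  rw [← mul_pow, Real.mul_self_sqrt (by norm_num)]
lemma Umat_transpose (d : ℕ) : (Umat d)ᵀ = Umat d := by
  ext x y
  rw [Matrix.transpose_apply, Umat_apply, Umat_apply, chi_comm]

lemma Umat_mul_Umat (d : ℕ) : Umat d * Umat d = 1 := by
  ext x y
  rw [Matrix.mul_apply]
  simp_rw [Umat_apply, div_mul_div_comm]
  rw [← Finset.sum_div, sum_chi_mul, sqrt_two_pow_mul]
  by_cases h : x = y
  · subst h
    rw [if_pos rfl, div_self (by positivity), Matrix.one_apply_eq]
  · rw [if_neg h, zero_div, Matrix.one_apply_ne h]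

/-- XOR change of variables for `firstDiff`. -/
lemma firstDiff_xor {d : ℕ} (x w : Fin d → Bool) :
    firstDiff x (fun q => xor (x q) (w q)) = firstDiff (fun _ => false) w := by
  unfold firstDiff
  congr 1
  ext q
  refine exists_congr fun h => ?_
  rcases hx : x ⟨q, h⟩ <;> rcases hw : w ⟨q, h⟩ <;> simp [hx, hw]

noncomputable def gfun (d : ℕ) (p : ℕ → ℝ) (w : Fin d → Bool) : ℝ :=
  if w = (fun _ => false) then p 0 else p (d - firstDiff (fun _ => false) w)

lemma xor_eq_self_iff {d : ℕ} (x w : Fin d → Bool) :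
    (x = fun q => xor (x q) (w q)) ↔ w = (fun _ => false) := by
  constructor
  · intro h
    funext q
    have := congrFun h q
    revert this
    cases x q <;> cases w q <;> simp
  · intro h
    subst h
    funext q
    simp

lemma Bmat_xor (d : ℕ) (p : ℕ → ℝ) (x w : Fin d → Bool) :
    Bmat d p x (fun q => xor (x q) (w q)) = gfun d p w := by
  unfold Bmat gfun
  simp only [Matrix.of_apply, firstDiff_xor x w, xor_eq_self_iff x w]

lemma sInf_shift (P : ℕ → Prop) (h0 : ¬ P 0) (hne : ∃ n, P (n+1)) :
    sInf {n | P n} = sInf {n | P (n+1)} + 1 := by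
  set m := sInf {n | P (n+1)} with hm
  have hPm : P (m+1) := Nat.sInf_mem hne
  apply le_antisymm
  · exact Nat.sInf_le hPm
  · have hmem : sInf {n | P n} ∈ {n | P n} := Nat.sInf_mem ⟨m+1, hPm⟩
    rcases Nat.eq_zero_or_pos (sInf {n | P n}) with h | h
    · exact absurd (h ▸ hmem) h0
    · obtain ⟨k, hk⟩ := Nat.exists_eq_succ_of_ne_zero h.ne'
      rw [hk] at hmem
      have : m ≤ k := Nat.sInf_le hmem
      omega

lemma firstDiff_cons_true {d : ℕ} (w : Fin d → Bool) :
    firstDiff (fun _ => false : Fin (d+1) → Bool) (Fin.cons true w) = 0 := by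
  unfold firstDiff
  refine Nat.sInf_eq_zero.mpr (Or.inl ?_)
  exact ⟨Nat.succ_pos d, by simp⟩

lemma firstDiff_cons_false {d : ℕ} (w : Fin d → Bool) (hw : w ≠ fun _ => false) :
    firstDiff (fun _ => false : Fin (d+1) → Bool) (Fin.cons false w) =
      firstDiff (fun _ => false) w + 1 := by
  obtain ⟨q0, hq0⟩ := Function.ne_iff.mp hw
  have hq0' : w q0 = true := by revert hq0; cases w q0 <;> simp
  have hs : {n : ℕ | ∃ h : n + 1 < d + 1,
      (fun _ => false : Fin (d+1) → Bool) ⟨n+1, h⟩ ≠ (Fin.cons false w : Fin (d+1) → Bool) ⟨n+1, h⟩}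
      = {q : ℕ | ∃ h : q < d, (fun _ => false : Fin d → Bool) ⟨q, h⟩ ≠ w ⟨q, h⟩} := by
    ext q
    constructor
    · rintro ⟨h, hne⟩
      exact ⟨by omega, by rwa [show ((⟨q+1, h⟩ : Fin (d+1))) = Fin.succ ⟨q, by omega⟩ from rfl,
        Fin.cons_succ] at hne⟩
    · rintro ⟨h, hne⟩
      exact ⟨by omega, by rwa [show ((⟨q+1, by omega⟩ : Fin (d+1))) = Fin.succ ⟨q, h⟩ from rfl,
        Fin.cons_succ]⟩
  have h0 : ¬ ∃ h : 0 < d + 1,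
      (fun _ => false : Fin (d+1) → Bool) ⟨0, h⟩ ≠ (Fin.cons false w : Fin (d+1) → Bool) ⟨0, h⟩ := by simp
  have hne2 : ∃ n, ∃ h : n + 1 < d + 1,
      (fun _ => false : Fin (d+1) → Bool) ⟨n+1, h⟩ ≠ (Fin.cons false w : Fin (d+1) → Bool) ⟨n+1, h⟩ := by
    refine ⟨q0, by omega, ?_⟩
    rw [show ((⟨(q0:ℕ)+1, by omega⟩ : Fin (d+1))) = Fin.succ q0 from (by apply Fin.ext; simp),
      Fin.cons_succ]
    simp [hq0']
  unfold firstDiff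
  rw [sInf_shift (fun n => ∃ h : n < d + 1,
    (fun _ => false : Fin (d+1) → Bool) ⟨n, h⟩ ≠ (Fin.cons false w : Fin (d+1) → Bool) ⟨n, h⟩) h0 hne2, hs]

lemma firstDiff_lt {d : ℕ} (w : Fin d → Bool) (hw : w ≠ fun _ => false) :
    firstDiff (fun _ => false) w < d := by
  obtain ⟨q0, hq0⟩ := Function.ne_iff.mp hw
  have : firstDiff (fun _ => false) w ≤ (q0 : ℕ) := by
    apply Nat.sInf_le
    refine ⟨q0.isLt, fun hcontra => hq0 ?_⟩
    simpa using hcontra.symm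
  exact lt_of_le_of_lt this q0.isLt

lemma cons_false_eq_zero_iff {d : ℕ} (w : Fin d → Bool) :
    (Fin.cons false w = fun _ => false : Prop) ↔ w = (fun _ => false) := by
  constructor
  · intro h
    funext q
    have := congrFun h (Fin.succ q)
    simpa using this
  · rintro rfl
    funext q
    refine Fin.cases ?_ ?_ q <;> simp

lemma gfun_cons (d : ℕ) (p : ℕ → ℝ) (b : Bool) (w : Fin d → Bool) :
    gfun (d+1) p (Fin.cons b w) = if b then p (d+1) else gfun d p w := by
  cases b
  · simp only [if_neg Bool.false_ne_true]
    by_cases hw : w = fun _ => false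
    · subst hw
      rw [gfun, if_pos ((cons_false_eq_zero_iff _).mpr rfl), gfun, if_pos rfl]
    · rw [gfun, if_neg (fun h => hw ((cons_false_eq_zero_iff _).mp h)),
        firstDiff_cons_false w hw, gfun, if_neg hw, Nat.succ_sub_succ]
  · have hne : Fin.cons true w ≠ (fun _ => false) := by
      intro h
      have := congrFun h 0
      simp at this
    rw [gfun, if_neg hne, firstDiff_cons_true, if_pos rfl, Nat.sub_zero]
lemma chi_cons {d : ℕ} (b c : Bool) (w y : Fin d → Bool) :
    chi (Fin.cons b w) (Fin.cons c y) = eps b c * chi w y := by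
  unfold chi
  rw [Fin.prod_univ_succ]
  simp [Fin.cons_zero, Fin.cons_succ]

lemma strVal_cons (d : ℕ) (b : Bool) (y : Fin d → Bool) :
    strVal (d+1) (Fin.cons b y) = (if b then 2^d else 0) + strVal d y := by
  unfold strVal
  have h1 : ∀ q : Fin d, (if (Fin.cons b y : Fin (d+1) → Bool) q.succ = true
      then 2^(d + 1 - 1 - ((q.succ : Fin (d+1)) : ℕ)) else 0)
      = (if y q = true then 2^(d - 1 - (q : ℕ)) else 0) := by
    intro q
    rw [Fin.cons_succ, Fin.val_succ,
      show d + 1 - 1 - ((q : ℕ) + 1) = d - 1 - (q : ℕ) from by omega]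
  rw [Fin.sum_univ_succ, Finset.sum_congr rfl fun q _ => h1 q]
  simp [Fin.cons_zero]

lemma strVal_lt (d : ℕ) (y : Fin d → Bool) : strVal d y < 2^d := by
  induction d with
  | zero => simp [strVal]
  | succ d ih =>
    rw [← Fin.cons_self_tail y, strVal_cons]
    have h1 := ih (Fin.tail y)
    have h2 : (2:ℕ)^(d+1) = 2^d + 2^d := by ring
    split_ifs <;> omega

lemma strVal_eq_zero_iff (d : ℕ) (y : Fin d → Bool) :
    strVal d y = 0 ↔ y = (fun _ => false) := by
  unfold strVal
  rw [Finset.sum_eq_zero_iff]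
  constructor
  · intro h
    funext q
    have := h q (mem_univ q)
    revert this
    cases hyq : y q <;> simp [hyq]
  · rintro rfl
    intro q _
    simp

lemma padic_lt {d m : ℕ} (hm : m ≠ 0) (hlt : m < 2^d) : padicValNat 2 m < d := by
  have hdvd : (2:ℕ)^(padicValNat 2 m) ∣ m := pow_padicValNat_dvd
  have h1 : 2^(padicValNat 2 m) ≤ m := Nat.le_of_dvd (Nat.pos_of_ne_zero hm) hdvd
  exact (Nat.pow_lt_pow_iff_right (by norm_num)).mp (lt_of_le_of_lt h1 hlt)

lemma padic_add {d m : ℕ} (hm : m ≠ 0) (hlt : m < 2^d) :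
    padicValNat 2 (2^d + m) = padicValNat 2 m := by
  set v := padicValNat 2 m with hv
  have hdvd : (2:ℕ)^v ∣ m := pow_padicValNat_dvd
  have hvd : v < d := padic_lt hm hlt
  have hne : 2^d + m ≠ 0 := by positivity
  apply le_antisymm
  · by_contra h
    push_neg at h
    have h3 : (2:ℕ)^(v+1) ∣ 2^d + m := (padicValNat_dvd_iff_le hne).mpr h
    have h2 : (2:ℕ)^(v+1) ∣ 2^d := pow_dvd_pow 2 (by omega)
    have h4 : (2:ℕ)^(v+1) ∣ m := (Nat.dvd_add_right h2).mp h3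
    exact pow_succ_padicValNat_not_dvd hm h4
  · exact (padicValNat_dvd_iff_le hne).mp (dvd_add (pow_dvd_pow 2 hvd.le) hdvd)

lemma lamB_zero_succ (d : ℕ) (p : ℕ → ℝ) :
    lamB (d+1) p 0 = lamB d p 0 + 2^d * p (d+1) := by
  rw [lamB, lamB, if_pos rfl, if_pos rfl,
    Finset.sum_Icc_succ_top (by omega : 1 ≤ d + 1)]
  norm_num
  ring

lemma lamB_succ_succ (d : ℕ) (p : ℕ → ℝ) (q : ℕ) (hq : q ≠ 0) :
    lamB (d+1) p (q+1) = lamB d p q := by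
  rw [lamB, lamB, if_neg (Nat.succ_ne_zero q), if_neg hq, Nat.succ_sub_succ]

lemma lamB_one (d : ℕ) (p : ℕ → ℝ) :
    lamB (d+1) p 1 = lamB d p 0 - 2^d * p (d+1) := by
  rw [lamB, lamB, if_neg one_ne_zero, if_pos rfl]
  norm_num

noncomputable def lamDiag (d : ℕ) (p : ℕ → ℝ) (y : Fin d → Bool) : ℝ :=
  if strVal d y = 0 then lamB d p 0 else lamB d p (d - padicValNat 2 (strVal d y))

lemma LamMat_eq (d : ℕ) (p : ℕ → ℝ) : LamMat d p = Matrix.diagonal (lamDiag d p) := rfl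

lemma lamDiag_stab (d : ℕ) (p : ℕ → ℝ) (y : Fin d → Bool) (hy : y ≠ fun _ => false) :
    lamB (d+1) p (d + 1 - padicValNat 2 (strVal d y)) = lamDiag d p y := by
  have hm : strVal d y ≠ 0 := fun h => hy ((strVal_eq_zero_iff d y).mp h)
  have hv : padicValNat 2 (strVal d y) < d := padic_lt hm (strVal_lt d y)
  rw [lamDiag, if_neg hm]
  have h1 : d + 1 - padicValNat 2 (strVal d y) = (d - padicValNat 2 (strVal d y)) + 1 := by
    omega
  rw [h1, lamB_succ_succ d p _ (by omega)]

lemma gfun_cons_true (d : ℕ) (p : ℕ → ℝ) (w : Fin d → Bool) :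
    gfun (d+1) p (Fin.cons true w) = p (d+1) := by
  rw [gfun_cons]; simp

lemma gfun_cons_false (d : ℕ) (p : ℕ → ℝ) (w : Fin d → Bool) :
    gfun (d+1) p (Fin.cons false w) = gfun d p w := by
  rw [gfun_cons]; simp

lemma strVal_zero_str (d : ℕ) : strVal d (fun _ => false) = 0 :=
  (strVal_eq_zero_iff d _).mpr rfl

lemma mainSum (d : ℕ) (p : ℕ → ℝ) (y : Fin d → Bool) :
    ∑ w : Fin d → Bool, gfun d p w * chi w y = lamDiag d p y := by
  induction d with
  | zero =>
    have h1 : y = (fun _ => false) := funext fun q => q.elim0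
    subst h1
    have h3 : ∀ w : Fin 0 → Bool, gfun 0 p w * chi w (fun _ => false) = p 0 := by
      intro w
      have hw : w = (fun _ => false) := funext fun q => q.elim0
      subst hw
      simp [gfun, chi]
    rw [Finset.sum_congr rfl fun w _ => h3 w, Finset.sum_const, Finset.card_univ]
    have hcard : Fintype.card (Fin 0 → Bool) = 1 := by simp
    rw [hcard]
    simp [lamDiag, strVal, lamB]
  | succ d ih =>
    obtain ⟨c, y', rfl⟩ : ∃ c y'', y = Fin.cons c y'' :=
      ⟨y 0, Fin.tail y, (Fin.cons_self_tail y).symm⟩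
    rw [← Equiv.sum_comp (Fin.consEquiv fun _ => Bool)
      (fun w => gfun (d+1) p w * chi w (Fin.cons c y')), Fintype.sum_prod_type,
      Fintype.sum_bool]
    have happ : ∀ (b : Bool) (w : Fin d → Bool),
        (Fin.consEquiv fun _ => Bool) (b, w) = Fin.cons b w := fun _ _ => rfl
    simp only [happ, gfun_cons_true, gfun_cons_false, chi_cons]
    have e1 : ∑ w : Fin d → Bool, p (d+1) * (eps true c * chi w y')
        = p (d+1) * eps true c *
            (if y' = (fun _ => false) then (2:ℝ)^d else 0) := by
      rw [← Finset.mul_sum, ← Finset.mul_sum, sum_chi, mul_assoc]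
    have e2 : ∑ w : Fin d → Bool, gfun d p w * (eps false c * chi w y')
        = lamDiag d p y' := by
      simp only [eps_false_left, one_mul]
      exact ih y'
    rw [e1, e2]
    by_cases hy0 : y' = (fun _ => false)
    · subst hy0
      rw [if_pos rfl]
      have hl0 : lamDiag d p (fun _ => false) = lamB d p 0 := by
        rw [lamDiag, if_pos (strVal_zero_str d)]
      cases c
      · have hsv : strVal (d+1) (Fin.cons false (fun _ => false)) = 0 := by
          rw [strVal_cons, strVal_zero_str]; simp
        conv_rhs => rw [lamDiag, hsv]
        rw [if_pos rfl, lamB_zero_succ, hl0]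
        simp [eps]
        ring
      · have hsv : strVal (d+1) (Fin.cons true (fun _ => false)) = 2^d := by
          rw [strVal_cons, strVal_zero_str]; simp
        have hp2 : (2:ℕ)^d ≠ 0 := by positivity
        conv_rhs => rw [lamDiag, hsv]
        rw [if_neg hp2, padicValNat.prime_pow,
          (by omega : d + 1 - d = 1), lamB_one, hl0]
        simp [eps]
        ring
    · rw [if_neg hy0]
      have hm : strVal d y' ≠ 0 := fun h => hy0 ((strVal_eq_zero_iff d y').mp h)
      cases c
      · have hsv : strVal (d+1) (Fin.cons false y') = strVal d y' := by
          rw [strVal_cons]; simp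
        conv_rhs => rw [lamDiag, hsv]
        rw [if_neg hm, lamDiag_stab d p y' hy0]
        ring
      · have hsv : strVal (d+1) (Fin.cons true y') = 2^d + strVal d y' := by
          rw [strVal_cons]; simp
        have hne : (2:ℕ)^d + strVal d y' ≠ 0 := by positivity
        conv_rhs => rw [lamDiag, hsv]
        rw [if_neg hne, padic_add hm (strVal_lt d y'),
          lamDiag_stab d p y' hy0]
        ring

lemma keySum (d : ℕ) (p : ℕ → ℝ) (x y : Fin d → Bool) :
    ∑ z : Fin d → Bool, Bmat d p x z * chi z y = lamDiag d p y * chi x y := by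
  have hinv : Function.Involutive (fun z : Fin d → Bool => fun q => xor (x q) (z q)) := by
    intro z
    funext q
    rcases hx : x q <;> rcases hz : z q <;> simp [hx, hz]
  set e : Equiv.Perm (Fin d → Bool) :=
    Function.Involutive.toPerm (fun z : Fin d → Bool => fun q => xor (x q) (z q)) hinv with he
  rw [← Equiv.sum_comp e (fun z => Bmat d p x z * chi z y)]
  have happ : ∀ z : Fin d → Bool, e z = fun q => xor (x q) (z q) := fun _ => rfl
  simp only [happ, Bmat_xor, chi_xor]
  have h1 : ∀ w : Fin d → Bool, gfun d p w * (chi x y * chi w y)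
      = chi x y * (gfun d p w * chi w y) := fun w => by ring
  simp_rw [h1]
  rw [← Finset.mul_sum, mainSum]
  ring

lemma BU (d : ℕ) (p : ℕ → ℝ) : Bmat d p * Umat d = Umat d * LamMat d p := by
  ext x y
  rw [Matrix.mul_apply, LamMat_eq, Matrix.mul_diagonal]
  simp_rw [Umat_apply, mul_div_assoc']
  rw [← Finset.sum_div, keySum]
  ring

theorem statement3 (d : ℕ) (hd : 1 ≤ d)
    (p : ℕ → ℝ) (hp : ∀ r ≤ d, p r ∈ Set.Icc (0:ℝ) 1) :
    -- U₁^{⊗d} is symmetric and orthogonal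
    (Umat d)ᵀ = Umat d ∧ Umat d * Umat d = 1
    -- and B_d = U₁^{⊗d} Λ_d U₁^{⊗d}
    ∧ Bmat d p = Umat d * LamMat d p * Umat d := by
  refine ⟨Umat_transpose d, Umat_mul_Umat d, ?_⟩
  calc Bmat d p = Bmat d p * (Umat d * Umat d) := by rw [Umat_mul_Umat, mul_one]
    _ = (Bmat d p * Umat d) * Umat d := by rw [mul_assoc]
    _ = Umat d * LamMat d p * Umat d := by rw [BU]

end BTSBM
end

section
/- Let P and H be n×n real symmetric matrices and A = P + H. Let λ_1 ≥ … ≥ λ_n be the eigenvalues of P with any orthonormal eigenvectors u_1, …, u_n (P u_s = λ_s u_s), and let λ̃_1 ≥ … ≥ λ̃_n be the eigenvalues of A with orthonormal eigenvectors ũ_1, …, ũ_n (A ũ_s = λ̃_s ũ_s). Fix t ∈ [n] such that λ_t has multiplicity 1 and set Δ_t = min{|λ_t − λ_s| : s ≠ t}. If ‖H‖ < |λ_t|/2 (spectral norm), then for every j ∈ [n]: min_{ζ∈{−1,+1}} |(ũ_t − ζ u_t)_j| ≤ (4‖H‖²/Δ_t² + 2‖H‖/|λ_t|)|u_{t,j}|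 + 2 ξ_j(u_t; H, λ_t) + (4√2 ‖H‖/Δ_t) Σ_{s≠t} |λ_s/λ_t| · (|u_{s,j}| + ξ_j(u_s; H, λ_t)), where ξ_j(u; H, λ) = Σ_{p≥1} (2/|λ|)^p |(H^p u)_j|. -/
open Finset Matrix
open scoped Matrix.Norms.L2Operator

namespace S5
variable {n : ℕ}

noncomputable def en (x : Fin n → ℝ) : EuclideanSpace ℝ (Fin n) := (WithLp.equiv 2 _).symm x

lemma en_inner (x y : Fin n → ℝ) : (inner ℝ (en x) (en y) : ℝ) = x ⬝ᵥ y := by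
  simp [en, PiLp.inner_apply, dotProduct, RCLike.inner_apply, mul_comm]

lemma en_norm_sq (x : Fin n → ℝ) : ‖en x‖ ^ 2 = x ⬝ᵥ x := by
  rw [← real_inner_self_eq_norm_sq, en_inner]

lemma abs_coord_le (x : Fin n → ℝ) (j : Fin n) : |x j| ≤ ‖en x‖ := by
  have h1 : |x j| ^ 2 ≤ ‖en x‖ ^ 2 := by
    rw [en_norm_sq]
    have : x j * x j ≤ ∑ i, x i * x i := by
      refine Finset.single_le_sum (f := fun i => x i * x i) (fun i _ => mul_self_nonneg _)
        (Finset.mem_univ j)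
    simpa [dotProduct, sq_abs, sq] using this
  nlinarith [abs_nonneg (x j), norm_nonneg (en x)]

lemma en_mulVec_le (M : Matrix (Fin n) (Fin n) ℝ) (x : Fin n → ℝ) :
    ‖en (M *ᵥ x)‖ ≤ ‖M‖ * ‖en x‖ := M.l2_opNorm_mulVec (en x)

lemma abs_dot_le (x y : Fin n → ℝ) : |x ⬝ᵥ y| ≤ ‖en x‖ * ‖en y‖ := by
  rw [← en_inner]; exact abs_real_inner_le_norm _ _

lemma pow_mulVec_coord (M : Matrix (Fin n) (Fin n) ℝ) (p : ℕ) (x : Fin n → ℝ) (j : Fin n) :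
    |(M ^ p *ᵥ x) j| ≤ ‖M‖ ^ p * ‖en x‖ := by
  induction p generalizing x with
  | zero => simpa using abs_coord_le x j
  | succ p ih =>
    have h1 : (M ^ (p + 1)) *ᵥ x = (M ^ p) *ᵥ (M *ᵥ x) := by
      rw [pow_succ, ← mulVec_mulVec]
    rw [h1]
    calc |((M ^ p) *ᵥ (M *ᵥ x)) j| ≤ ‖M‖ ^ p * ‖en (M *ᵥ x)‖ := ih _
    _ ≤ ‖M‖ ^ p * (‖M‖ * ‖en x‖) := by
        exact mul_le_mul_of_nonneg_left (en_mulVec_le M x) (pow_nonneg (norm_nonneg M) p)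
    _ = ‖M‖ ^ (p + 1) * ‖en x‖ := by ring



/-- completeness of an orthonormal family of n vectors in ℝ^n -/
lemma complete (u : Fin n → Fin n → ℝ)
    (huon : ∀ s s', u s ⬝ᵥ u s' = if s = s' then (1 : ℝ) else 0) (i k : Fin n) :
    ∑ s, u s i * u s k = if i = k then (1 : ℝ) else 0 := by
  have hU : (Matrix.of u) * (Matrix.of u)ᵀ = 1 := by
    ext s s'
    simpa [Matrix.mul_apply, dotProduct, Matrix.one_apply] using huon s s'
  have hU2 : (Matrix.of u)ᵀ * (Matrix.of u) = 1 := mul_eq_one_comm.mp hU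
  have := congrArg (fun M => M i k) hU2
  simpa [Matrix.mul_apply, Matrix.one_apply, mul_comm] using this

lemma expansion (u : Fin n → Fin n → ℝ)
    (huon : ∀ s s', u s ⬝ᵥ u s' = if s = s' then (1 : ℝ) else 0) (x : Fin n → ℝ) (i : Fin n) :
    x i = ∑ s, (u s ⬝ᵥ x) * u s i := by
  have : ∑ s, (u s ⬝ᵥ x) * u s i = ∑ k, (∑ s, u s i * u s k) * x k := by
    simp only [dotProduct, Finset.sum_mul, Finset.mul_sum]
    rw [Finset.sum_comm]
    congr 1; ext s; congr 1; ext k; ring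
  rw [this]
  simp [complete u huon i, Finset.sum_ite_eq', eq_comm]

lemma parseval (u : Fin n → Fin n → ℝ)
    (huon : ∀ s s', u s ⬝ᵥ u s' = if s = s' then (1 : ℝ) else 0) (x y : Fin n → ℝ) :
    x ⬝ᵥ y = ∑ s, (u s ⬝ᵥ x) * (u s ⬝ᵥ y) := by
  have key : ∀ s, ∑ i, ((u s ⬝ᵥ x) * u s i) * y i = (u s ⬝ᵥ x) * (u s ⬝ᵥ y) := by
    intro s
    simp only [mul_assoc]
    rw [← Finset.mul_sum]
    rfl
  calc x ⬝ᵥ y = ∑ i, x i * y i := rfl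
  _ = ∑ i, (∑ s, (u s ⬝ᵥ x) * u s i) * y i := by
        apply Finset.sum_congr rfl; intro i _; rw [← expansion u huon x i]
  _ = ∑ i, ∑ s, ((u s ⬝ᵥ x) * u s i) * y i := by
        apply Finset.sum_congr rfl; intro i _; rw [Finset.sum_mul]
  _ = ∑ s, ∑ i, ((u s ⬝ᵥ x) * u s i) * y i := Finset.sum_comm
  _ = ∑ s, (u s ⬝ᵥ x) * (u s ⬝ᵥ y) := Finset.sum_congr rfl fun s _ => key s

/-- symmetric matrix moves across dot product -/
lemma symm_dot (M : Matrix (Fin n) (Fin n) ℝ) (hM : M.IsSymm) (x y : Fin n → ℝ) :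
    (M *ᵥ x) ⬝ᵥ y = x ⬝ᵥ (M *ᵥ y) := by
  rw [Matrix.dotProduct_mulVec, ← Matrix.mulVec_transpose, hM.eq]


def dotL (v : Fin n → ℝ) : (Fin n → ℝ) →ₗ[ℝ] ℝ where
  toFun x := v ⬝ᵥ x
  map_add' x y := dotProduct_add v x y
  map_smul' c x := by simp [dotProduct_smul]

@[simp] lemma dotL_apply (v x : Fin n → ℝ) : dotL v x = v ⬝ᵥ x := rfl

lemma orthonormal_li (u : Fin n → Fin n → ℝ)
    (huon : ∀ s s', u s ⬝ᵥ u s' = if s = s' then (1 : ℝ) else 0) :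
    LinearIndependent ℝ u := by
  rw [Fintype.linearIndependent_iff]
  intro g hg r
  have h2 : dotL (u r) (∑ s, g s • u s) = g r := by
    rw [map_sum]
    have : ∀ s, dotL (u r) (g s • u s) = g s * (if r = s then (1:ℝ) else 0) := by
      intro s
      rw [_root_.map_smul]
      simp only [dotL_apply, huon r s, smul_eq_mul]
    simp only [this]
    simp
  rw [hg] at h2
  simp only [map_zero] at h2
  exact h2.symm

lemma span_dot_zero (u : Fin n → Fin n → ℝ) (S : Set (Fin n)) (x : Fin n → ℝ)
    (hx : x ∈ Submodule.span ℝ (u '' S)) (r : Fin n) (hr : ∀ s ∈ S, u r ⬝ᵥ u s = 0) :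
    u r ⬝ᵥ x = 0 := by
  have hle : Submodule.span ℝ (u '' S) ≤ LinearMap.ker (dotL (u r)) := by
    rw [Submodule.span_le]
    rintro _ ⟨s, hs, rfl⟩
    exact hr s hs
  exact hle hx

lemma finrank_span_on (u : Fin n → Fin n → ℝ)
    (huon : ∀ s s', u s ⬝ᵥ u s' = if s = s' then (1 : ℝ) else 0) (S : Set (Fin n)) [Fintype S] :
    Module.finrank ℝ (Submodule.span ℝ (u '' S)) = Fintype.card S := by
  have li : LinearIndependent ℝ (fun s : S => u s) :=
    (orthonormal_li u huon).comp Subtype.val Subtype.val_injective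
  have h1 := finrank_span_eq_card li
  rw [Set.image_eq_range]
  exact h1

lemma weyl_le (P A : Matrix (Fin n) (Fin n) ℝ) (hP : P.IsSymm) (hA : A.IsSymm)
    (lam lamT : Fin n → ℝ) (u uT : Fin n → Fin n → ℝ)
    (hlam : Antitone lam) (hlamT : Antitone lamT)
    (hu : ∀ s, P *ᵥ u s = lam s • u s)
    (huon : ∀ s s', u s ⬝ᵥ u s' = if s = s' then (1 : ℝ) else 0)
    (huT : ∀ s, A *ᵥ uT s = lamT s • uT s)
    (huTon : ∀ s s', uT s ⬝ᵥ uT s' = if s = s' then (1 : ℝ) else 0)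
    (t : Fin n) : lamT t ≤ lam t + ‖A - P‖ := by
  classical
  set U₁ := Submodule.span ℝ (uT '' Set.Iic t) with hU₁
  set U₂ := Submodule.span ℝ (u '' Set.Ici t) with hU₂
  have hr1 : Module.finrank ℝ U₁ = (t : ℕ) + 1 := by
    rw [hU₁, finrank_span_on uT huTon, Fintype.card_Iic, Fin.card_Iic]
  have hr2 : Module.finrank ℝ U₂ = n - (t : ℕ) := by
    rw [hU₂, finrank_span_on u huon, Fintype.card_Ici, Fin.card_Ici]
  have hsum := Submodule.finrank_sup_add_finrank_inf_eq U₁ U₂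
  have htop : Module.finrank ℝ (U₁ ⊔ U₂ : Submodule ℝ (Fin n → ℝ)) ≤ n := by
    have := Submodule.finrank_le (U₁ ⊔ U₂)
    rwa [Module.finrank_pi, Fintype.card_fin] at this
  have hinf : 0 < Module.finrank ℝ (U₁ ⊓ U₂ : Submodule ℝ (Fin n → ℝ)) := by
    have ht := t.isLt
    omega
  obtain ⟨x, hxne⟩ := Module.finrank_pos_iff_exists_ne_zero.mp hinf
  obtain ⟨x, hxmem⟩ := x
  have hxne' : x ≠ 0 := by
    intro h; apply hxne; ext; simp [h]
  have hx1 : x ∈ U₁ := hxmem.1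
  have hx2 : x ∈ U₂ := hxmem.2
  set c : Fin n → ℝ := fun s => u s ⬝ᵥ x with hc
  set cT : Fin n → ℝ := fun s => uT s ⬝ᵥ x with hcT
  have hc0 : ∀ s, ¬ (t ≤ s) → c s = 0 := by
    intro s hs
    refine span_dot_zero u (Set.Ici t) x hx2 s ?_
    intro r hrm
    rw [huon s r, if_neg]
    rintro rfl; exact hs hrm
  have hcT0 : ∀ s, ¬ (s ≤ t) → cT s = 0 := by
    intro s hs
    refine span_dot_zero uT (Set.Iic t) x hx1 s ?_
    intro r hrm
    rw [huTon s r, if_neg]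
    rintro rfl; exact hs hrm
  have hX : x ⬝ᵥ x = ∑ s, c s * c s := parseval u huon x x
  have hXT : x ⬝ᵥ x = ∑ s, cT s * cT s := parseval uT huTon x x
  have hXpos : 0 < x ⬝ᵥ x := by
    have h1 : en x ≠ 0 := by
      intro h; apply hxne'
      have := congrArg (WithLp.equiv 2 (Fin n → ℝ)) h
      simpa [en] using this
    have := norm_pos_iff.mpr h1
    nlinarith [en_norm_sq x]
  have hquadP : x ⬝ᵥ (P *ᵥ x) = ∑ s, lam s * (c s * c s) := by
    rw [parseval u huon x (P *ᵥ x)]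
    apply Finset.sum_congr rfl
    intro s _
    have : u s ⬝ᵥ (P *ᵥ x) = lam s * c s := by
      rw [← symm_dot P hP, hu s, smul_dotProduct]; rfl
    rw [this]; ring
  have hquadA : x ⬝ᵥ (A *ᵥ x) = ∑ s, lamT s * (cT s * cT s) := by
    rw [parseval uT huTon x (A *ᵥ x)]
    apply Finset.sum_congr rfl
    intro s _
    have : uT s ⬝ᵥ (A *ᵥ x) = lamT s * cT s := by
      rw [← symm_dot A hA, huT s, smul_dotProduct]; rfl
    rw [this]; ring
  have hPle : x ⬝ᵥ (P *ᵥ x) ≤ lam t * (x ⬝ᵥ x) := by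
    rw [hquadP, hX, Finset.mul_sum]
    apply Finset.sum_le_sum
    intro s _
    by_cases hts : t ≤ s
    · have := hlam hts
      nlinarith [mul_self_nonneg (c s)]
    · rw [hc0 s hts]; simp
  have hAge : lamT t * (x ⬝ᵥ x) ≤ x ⬝ᵥ (A *ᵥ x) := by
    rw [hquadA, hXT, Finset.mul_sum]
    apply Finset.sum_le_sum
    intro s _
    by_cases hts : s ≤ t
    · have := hlamT hts
      nlinarith [mul_self_nonneg (cT s)]
    · rw [hcT0 s hts]; simp
  have hHle : x ⬝ᵥ (A *ᵥ x) - x ⬝ᵥ (P *ᵥ x) ≤ ‖A - P‖ * (x ⬝ᵥ x) := by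
    have h1 : x ⬝ᵥ (A *ᵥ x) - x ⬝ᵥ (P *ᵥ x) = x ⬝ᵥ ((A - P) *ᵥ x) := by
      rw [sub_mulVec, dotProduct_sub]
    rw [h1]
    calc x ⬝ᵥ ((A - P) *ᵥ x) ≤ |x ⬝ᵥ ((A - P) *ᵥ x)| := le_abs_self _
    _ ≤ ‖en x‖ * ‖en ((A - P) *ᵥ x)‖ := abs_dot_le _ _
    _ ≤ ‖en x‖ * (‖A - P‖ * ‖en x‖) := by
        exact mul_le_mul_of_nonneg_left (en_mulVec_le _ _) (norm_nonneg _)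
    _ = ‖A - P‖ * ‖en x‖ ^ 2 := by ring
    _ = ‖A - P‖ * (x ⬝ᵥ x) := by rw [en_norm_sq]
  have final : lamT t * (x ⬝ᵥ x) ≤ (lam t + ‖A - P‖) * (x ⬝ᵥ x) := by nlinarith
  exact le_of_mul_le_mul_right final hXpos

lemma abs_tsum_le_tsum {f : ℕ → ℝ} (h : Summable (fun p => |f p|)) :
    |∑' p, f p| ≤ ∑' p, |f p| := by
  have h2 : Summable (fun p => ‖f p‖) := by
    refine h.congr (fun p => ?_)
    rw [Real.norm_eq_abs]
  have h3 := norm_tsum_le_tsum_norm h2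
  rw [Real.norm_eq_abs] at h3
  refine le_trans h3 (le_of_eq (tsum_congr (fun p => ?_)))
  rw [Real.norm_eq_abs]

lemma en_norm_one (x : Fin n → ℝ) (h : x ⬝ᵥ x = 1) : ‖en x‖ = 1 := by
  have h2 := en_norm_sq x
  nlinarith [norm_nonneg (en x)]

lemma summable_abs_aux (H : Matrix (Fin n) (Fin n) ℝ) (d : ℝ) (x : Fin n → ℝ) (j : Fin n)
    (hd : |d| * ‖H‖ < 1) :
    Summable (fun p : ℕ => |d ^ (p + 1) * ((H ^ p) *ᵥ x) j|) := by
  have h0 : (0:ℝ) ≤ |d| * ‖H‖ := mul_nonneg (abs_nonneg d) (norm_nonneg H)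
  have hg : Summable (fun p : ℕ => (|d| * ‖H‖) ^ p * (|d| * ‖en x‖)) :=
    (summable_geometric_of_lt_one h0 hd).mul_right _
  refine Summable.of_nonneg_of_le (fun p => abs_nonneg _) (fun p => ?_) hg
  rw [abs_mul, abs_pow]
  calc |d| ^ (p+1) * |((H ^ p) *ᵥ x) j| ≤ |d| ^ (p+1) * (‖H‖ ^ p * ‖en x‖) :=
        mul_le_mul_of_nonneg_left (pow_mulVec_coord H p x j) (pow_nonneg (abs_nonneg d) _)
  _ = (|d| * ‖H‖) ^ p * (|d| * ‖en x‖) := by rw [mul_pow]; ring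

lemma summable_abs_aux' (H : Matrix (Fin n) (Fin n) ℝ) (d : ℝ) (x : Fin n → ℝ) (j : Fin n)
    (hd : |d| * ‖H‖ < 1) :
    Summable (fun p : ℕ => |d ^ (p + 1) * ((H ^ (p + 1)) *ᵥ x) j|) := by
  refine (summable_abs_aux H d (H *ᵥ x) j hd).congr (fun p => ?_)
  rw [Matrix.mulVec_mulVec, ← pow_succ]

end S5

open S5

set_option maxHeartbeats 3200000 in
/-- Modified Theorem 9 of Eldridge et al.: entrywise eigenvector perturbation bound.
`‖·‖` is the spectral (ℓ₂ operator) norm, `lam`/`u` (resp. `lamT`/`uT`) are the ordered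
eigenvalues and an orthonormal system of eigenvectors of `P` (resp. of `A = P + H`),
`Δ` is the eigengap of `lam t`, and
`xi v j = ξ_j(v; H, λ_t) = Σ_{p ≥ 1} (2/|λ_t|)^p |(H^p v)_j|`. -/
theorem statement5 (n : ℕ) (P H : Matrix (Fin n) (Fin n) ℝ)
    (hPsymm : P.IsSymm) (hHsymm : H.IsSymm)
    (lam lamT : Fin n → ℝ) (u uT : Fin n → Fin n → ℝ)
    (hlam : Antitone lam) (hlamT : Antitone lamT)
    (hu : ∀ s, P.mulVec (u s) = lam s • u s)
    (huon : ∀ s s', u s ⬝ᵥ u s' = if s = s' then (1 : ℝ) else 0)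
    (huT : ∀ s, (P + H).mulVec (uT s) = lamT s • uT s)
    (huTon : ∀ s s', uT s ⬝ᵥ uT s' = if s = s' then (1 : ℝ) else 0)
    (t : Fin n) (hmult : ∀ s, lam s = lam t → s = t)
    (Δ : ℝ) (hΔ : Δ = sInf {r : ℝ | ∃ s, s ≠ t ∧ r = |lam t - lam s|})
    (hH : ‖H‖ < |lam t| / 2)
    (xi : (Fin n → ℝ) → Fin n → ℝ)
    (hxi : ∀ v j, xi v j
        = ∑' pp : ℕ, (2 / |lam t|) ^ (pp + 1) * |(H ^ (pp + 1)).mulVec v j|) :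
    ∀ j, min |uT t j - u t j| |uT t j + u t j| ≤
      (4 * ‖H‖ ^ 2 / Δ ^ 2 + 2 * ‖H‖ / |lam t|) * |u t j| + 2 * xi (u t) j
        + (4 * Real.sqrt 2 * ‖H‖ / Δ) *
            ∑ s ∈ Finset.univ.erase t, |lam s / lam t| * (|u s j| + xi (u s) j) := by
  intro j
  classical
  have hε0 : (0:ℝ) ≤ ‖H‖ := norm_nonneg H
  have hlpos : 0 < |lam t| := by linarith
  have hlne : lam t ≠ 0 := abs_pos.mp hlpos
  have hxin : ∀ v, 0 ≤ xi v j := by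
    intro v; rw [hxi]
    exact tsum_nonneg (fun pp => mul_nonneg (by positivity) (abs_nonneg _))
  by_cases hn1 : ∃ s : Fin n, s ≠ t
  case neg =>
    push_neg at hn1
    have huniv : (Finset.univ : Finset (Fin n)) = {t} := by
      ext s; simp [hn1 s]
    have herase : (Finset.univ.erase t : Finset (Fin n)) = ∅ := by
      ext s; simp [hn1 s]
    have hct : (u t ⬝ᵥ uT t) * (u t ⬝ᵥ uT t) = 1 := by
      have hp := parseval u huon (uT t) (uT t)
      rw [huTon t t, huniv, Finset.sum_singleton] at hp
      simpa using hp.symm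
    have hexp : uT t j = (u t ⬝ᵥ uT t) * u t j := by
      have h2 := expansion u huon (uT t) j
      rwa [huniv, Finset.sum_singleton] at h2
    have hmin0 : min |uT t j - u t j| |uT t j + u t j| ≤ 0 := by
      rcases mul_self_eq_one_iff.mp hct with h | h
      · refine le_trans (min_le_left _ _) ?_
        rw [hexp, h, one_mul, sub_self, abs_zero]
      · refine le_trans (min_le_right _ _) ?_
        rw [hexp, h]; ring_nf; simp
    have h1 : 0 ≤ (4 * ‖H‖ ^ 2 / Δ ^ 2 + 2 * ‖H‖ / |lam t|) * |u t j| := by positivity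
    have h2 : 0 ≤ 2 * xi (u t) j := by linarith [hxin (u t)]
    rw [herase]
    simp only [Finset.sum_empty, mul_zero, add_zero]
    linarith
  -- main case
  obtain ⟨s₀, hs₀⟩ := hn1
  -- Δ facts
  have hfin : {r : ℝ | ∃ s, s ≠ t ∧ r = |lam t - lam s|}.Finite := by
    have hsub : {r : ℝ | ∃ s, s ≠ t ∧ r = |lam t - lam s|}
        ⊆ Set.range (fun s => |lam t - lam s|) := by
      rintro r ⟨s, _, rfl⟩; exact ⟨s, rfl⟩
    exact (Set.finite_range _).subset hsub
  have hnem : {r : ℝ | ∃ s, s ≠ t ∧ r = |lam t - lam s|}.Nonempty :=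
    ⟨|lam t - lam s₀|, s₀, hs₀, rfl⟩
  have hΔmem : Δ ∈ {r : ℝ | ∃ s, s ≠ t ∧ r = |lam t - lam s|} := by
    rw [hΔ]; exact hnem.csInf_mem hfin
  have hΔpos : 0 < Δ := by
    obtain ⟨s₁, hs₁, heq⟩ := hΔmem
    rw [heq]
    refine abs_pos.mpr (fun hz => hs₁ (hmult s₁ (by linarith)))
  have hΔle : ∀ s, s ≠ t → Δ ≤ |lam t - lam s| := by
    intro s hs
    rw [hΔ]
    exact csInf_le hfin.bddBelow ⟨s, hs, rfl⟩
  -- Weyl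
  have hAsymm : (P + H).IsSymm := hPsymm.add hHsymm
  have hW1 : lamT t ≤ lam t + ‖(P + H) - P‖ :=
    weyl_le P (P + H) hPsymm hAsymm lam lamT u uT hlam hlamT hu huon huT huTon t
  have hW2 : lam t ≤ lamT t + ‖P - (P + H)‖ :=
    weyl_le (P + H) P hAsymm hPsymm lamT lam uT u hlamT hlam huT huTon hu huon t
  have he1 : (P + H) - P = H := by abel
  have he2 : P - (P + H) = -H := by abel
  rw [he1] at hW1
  rw [he2, norm_neg] at hW2
  have hW : |lamT t - lam t| ≤ ‖H‖ := abs_le.mpr ⟨by linarith, by linarith⟩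
  have hltb : |lam t| / 2 < |lamT t| := by
    have h3 : |lam t| - |lamT t| ≤ |lam t - lamT t| := abs_sub_abs_le_abs_sub _ _
    rw [abs_sub_comm] at h3
    linarith
  have hltne : lamT t ≠ 0 := abs_pos.mp (by linarith)
  have hq : |(lamT t)⁻¹| ≤ 2 / |lam t| := by
    rw [abs_inv]
    have h1 : (|lam t| / 2)⁻¹ = 2 / |lam t| := by field_simp
    rw [← h1]
    exact inv_anti₀ (by linarith) (le_of_lt hltb)
  have hq0 : (0:ℝ) ≤ 2 / |lam t| := by positivity
  have hrr : (2 / |lam t|) * ‖H‖ < 1 := by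
    rcases eq_or_lt_of_le hε0 with h | h
    · rw [← h, mul_zero]; norm_num
    · calc (2 / |lam t|) * ‖H‖ < (2 / |lam t|) * (|lam t| / 2) :=
          mul_lt_mul_of_pos_left hH (by positivity)
      _ = 1 := by field_simp
  have hr1 : |(lamT t)⁻¹| * ‖H‖ < 1 :=
    lt_of_le_of_lt (mul_le_mul_of_nonneg_right hq hε0) hrr
  have hr2 : |2 / (abs (lam t))| * ‖H‖ < 1 := by rwa [abs_of_nonneg hq0]
  -- coefficients
  set c : Fin n → ℝ := fun s => u s ⬝ᵥ uT t with hcdef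
  have hnu : ∀ s : Fin n, ‖en (u s)‖ = 1 := fun s => en_norm_one _ (by rw [huon s s]; simp)
  have hnuT : ‖en (uT t)‖ = 1 := en_norm_one _ (by rw [huTon t t]; simp)
  have hc1 : ∑ s, c s * c s = 1 := by
    have hp := parseval u huon (uT t) (uT t)
    rw [huTon t t] at hp
    simpa using hp.symm
  have hcsq : ∀ s, c s * c s ≤ 1 := by
    intro s
    have h1 : c s * c s ≤ ∑ s', c s' * c s' :=
      Finset.single_le_sum (f := fun s' => c s' * c s') (fun i _ => mul_self_nonneg _)
        (Finset.mem_univ s)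
    linarith [hc1]
  have hcle : ∀ s, |c s| ≤ 1 := by
    intro s
    nlinarith [hcsq s, abs_nonneg (c s), sq_abs (c s)]
  have hHuT : ‖en (H *ᵥ uT t)‖ ≤ ‖H‖ := by
    have := en_mulVec_le H (uT t)
    rwa [hnuT, mul_one] at this
  have hPdot : ∀ s, u s ⬝ᵥ (P *ᵥ uT t) = lam s * c s := by
    intro s
    rw [← symm_dot P hPsymm, hu s, smul_dotProduct]
    rfl
  have hcross : ∀ s, u s ⬝ᵥ (H *ᵥ uT t) = (lamT t - lam s) * c s := by
    intro s
    have h1 : u s ⬝ᵥ ((P + H) *ᵥ uT t) = lamT t * c s := by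
      rw [huT t, dotProduct_smul]; rfl
    rw [Matrix.add_mulVec, dotProduct_add, hPdot s] at h1
    linarith
  have hcross_le : ∀ s, |lamT t - lam s| * |c s| ≤ ‖H‖ := by
    intro s
    rw [← abs_mul, ← hcross s]
    calc |u s ⬝ᵥ (H *ᵥ uT t)| ≤ ‖en (u s)‖ * ‖en (H *ᵥ uT t)‖ := abs_dot_le _ _
    _ ≤ ‖H‖ := by rw [hnu s, one_mul]; exact hHuT
  have hgap : ∀ s, s ≠ t → Δ - ‖H‖ ≤ |lamT t - lam s| := by
    intro s hs
    have h1 := hΔle s hs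
    have h2 : |lam t - lam s| ≤ |lam t - lamT t| + |lamT t - lam s| := abs_sub_le _ _ _
    rw [abs_sub_comm (lam t) (lamT t)] at h2
    linarith
  have hw2 : Real.sqrt 2 ^ 2 = 2 := Real.sq_sqrt (by norm_num)
  have hw2a : 1 ≤ Real.sqrt 2 := by nlinarith [Real.sqrt_nonneg 2]
  -- C2 : |c s| ≤ 2√2 ε / Δ for s ≠ t
  have hC2 : ∀ s, s ≠ t → |c s| ≤ 2 * Real.sqrt 2 * ‖H‖ / Δ := by
    intro s hs
    have key : |c s| * (Δ - ‖H‖) ≤ ‖H‖ := by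
      calc |c s| * (Δ - ‖H‖) ≤ |c s| * |lamT t - lam s| :=
            mul_le_mul_of_nonneg_left (hgap s hs) (abs_nonneg _)
      _ = |lamT t - lam s| * |c s| := by ring
      _ ≤ ‖H‖ := hcross_le s
    rw [le_div_iff₀ hΔpos]
    nlinarith [abs_nonneg (c s), hcle s]
  -- C3 : ∑_{s ≠ t} c s ^ 2 ≤ 4 ε² / Δ²
  have hHsq : (H *ᵥ uT t) ⬝ᵥ (H *ᵥ uT t) ≤ ‖H‖ ^ 2 := by
    nlinarith [en_norm_sq (H *ᵥ uT t), hHuT, norm_nonneg (en (H *ᵥ uT t))]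
  have hsum_sq : ∑ s, ((lamT t - lam s) * c s) * ((lamT t - lam s) * c s) ≤ ‖H‖ ^ 2 := by
    have hp := parseval u huon (H *ᵥ uT t) (H *ᵥ uT t)
    rw [Finset.sum_congr rfl (fun s _ => by rw [hcross s])] at hp
    linarith [hHsq]
  have hC3 : ∑ s ∈ Finset.univ.erase t, c s * c s ≤ 4 * ‖H‖ ^ 2 / Δ ^ 2 := by
    by_cases hcase : Δ ≤ 2 * ‖H‖
    · have h1 : ∑ s ∈ Finset.univ.erase t, c s * c s ≤ 1 := by
        rw [← hc1]
        exact Finset.sum_le_sum_of_subset_of_nonneg (Finset.subset_univ _)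
          (fun i _ _ => mul_self_nonneg _)
      have h2 : (1:ℝ) ≤ 4 * ‖H‖ ^ 2 / Δ ^ 2 := by
        rw [le_div_iff₀ (by positivity)]
        nlinarith
      linarith
    · push_neg at hcase
      have h3 : ∑ s ∈ Finset.univ.erase t, (Δ / 2) ^ 2 * (c s * c s)
          ≤ ∑ s ∈ Finset.univ.erase t, ((lamT t - lam s) * c s) * ((lamT t - lam s) * c s) := by
        refine Finset.sum_le_sum (fun s hs => ?_)
        have h4 := hgap s (Finset.mem_erase.mp hs).1
        have h5 : Δ / 2 ≤ |lamT t - lam s| := by linarith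
        have h7 : (Δ / 2) ^ 2 ≤ (lamT t - lam s) ^ 2 := by
          rw [← sq_abs (lamT t - lam s)]
          exact pow_le_pow_left₀ (by positivity) h5 2
        calc (Δ / 2) ^ 2 * (c s * c s) ≤ (lamT t - lam s) ^ 2 * (c s * c s) :=
              mul_le_mul_of_nonneg_right h7 (mul_self_nonneg _)
        _ = ((lamT t - lam s) * c s) * ((lamT t - lam s) * c s) := by ring
      have h6 : ∑ s ∈ Finset.univ.erase t, ((lamT t - lam s) * c s) * ((lamT t - lam s) * c s)
          ≤ ‖H‖ ^ 2 := by
        refine le_trans (Finset.sum_le_sum_of_subset_of_nonneg (Finset.subset_univ _)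
          (fun i _ _ => mul_self_nonneg _)) hsum_sq
      rw [← Finset.mul_sum] at h3
      rw [le_div_iff₀ (by positivity : (0:ℝ) < Δ ^ 2)]
      have h8 : (∑ s ∈ Finset.univ.erase t, c s * c s) * Δ ^ 2
          = 4 * ((Δ / 2) ^ 2 * ∑ s ∈ Finset.univ.erase t, c s * c s) := by ring
      linarith [le_trans h3 h6]
  -- series setup
  have hsum1 : ∀ x : Fin n → ℝ,
      Summable (fun p : ℕ => |((lamT t)⁻¹) ^ (p+1) * ((H ^ p) *ᵥ x) j|) :=
    fun x => summable_abs_aux H _ x j hr1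
  have hsum2 : ∀ x : Fin n → ℝ,
      Summable (fun p : ℕ => |((lamT t)⁻¹) ^ (p+1) * ((H ^ (p+1)) *ᵥ x) j|) :=
    fun x => summable_abs_aux' H _ x j hr1
  have hsumxi : ∀ x : Fin n → ℝ,
      Summable (fun p : ℕ => (2 / |lam t|) ^ (p+1) * |((H ^ (p+1)) *ᵥ x) j|) := by
    intro x
    refine (summable_abs_aux' H (2 / |lam t|) x j hr2).congr (fun p => ?_)
    rw [abs_mul, abs_pow, abs_of_nonneg hq0]
  set ρ : Fin n → ℝ :=
    fun s => ∑' pp : ℕ, ((lamT t)⁻¹) ^ (pp+1) * ((H ^ (pp+1)) *ᵥ u s) j with hρdef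
  have hρle : ∀ s, |ρ s| ≤ xi (u s) j := by
    intro s
    rw [hxi]
    calc |ρ s| ≤ ∑' pp : ℕ, |((lamT t)⁻¹) ^ (pp+1) * ((H ^ (pp+1)) *ᵥ u s) j| :=
          abs_tsum_le_tsum (hsum2 (u s))
    _ ≤ ∑' pp : ℕ, (2 / |lam t|) ^ (pp+1) * |((H ^ (pp+1)) *ᵥ u s) j| := by
        refine Summable.tsum_le_tsum (fun p => ?_) (hsum2 (u s)) (hsumxi (u s))
        rw [abs_mul, abs_pow]
        exact mul_le_mul_of_nonneg_right (pow_le_pow_left₀ (abs_nonneg _) hq _) (abs_nonneg _)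
  -- Neumann expansion
  have hbase : uT t = (lamT t)⁻¹ • (P *ᵥ uT t) + (lamT t)⁻¹ • (H *ᵥ uT t) := by
    have h2 : uT t = (lamT t)⁻¹ • ((P + H) *ᵥ uT t) := by
      rw [huT t, smul_smul, inv_mul_cancel₀ hltne, one_smul]
    conv_lhs => rw [h2]
    rw [Matrix.add_mulVec, smul_add]
  have hNv : ∀ m : ℕ, uT t
      = (∑ p ∈ Finset.range (m+1), ((lamT t)⁻¹) ^ (p+1) • ((H ^ p) *ᵥ (P *ᵥ uT t)))
        + ((lamT t)⁻¹) ^ (m+1) • ((H ^ (m+1)) *ᵥ uT t) := by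
    intro m
    induction m with
    | zero => simpa [Finset.sum_range_one, Matrix.one_mulVec] using hbase
    | succ m ih =>
      have htail : ((lamT t)⁻¹) ^ (m+1) • ((H ^ (m+1)) *ᵥ uT t)
          = ((lamT t)⁻¹) ^ (m+2) • ((H ^ (m+1)) *ᵥ (P *ᵥ uT t))
            + ((lamT t)⁻¹) ^ (m+2) • ((H ^ (m+2)) *ᵥ uT t) := by
        have e1 : ((lamT t)⁻¹:ℝ) ^ (m+2) = ((lamT t)⁻¹) ^ (m+1) * (lamT t)⁻¹ := by
          rw [pow_succ]
        have e2 : (H : Matrix (Fin n) (Fin n) ℝ) ^ (m+2) = H ^ (m+1) * H := by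
          rw [pow_succ]
        rw [e1, e2]
        conv_lhs => rw [hbase]
        rw [Matrix.mulVec_add, Matrix.mulVec_smul, Matrix.mulVec_smul, smul_add,
          smul_smul, smul_smul, ← Matrix.mulVec_mulVec]
      rw [Finset.sum_range_succ]
      conv_lhs => rw [ih, htail]
      abel
  set F : ℕ → ℝ := fun p => ((lamT t)⁻¹) ^ (p+1) * ((H ^ p) *ᵥ (P *ᵥ uT t)) j with hFdef
  have hFsum : Summable F := (hsum1 (P *ᵥ uT t)).of_abs
  have hpart : ∀ m : ℕ, ∑ p ∈ Finset.range (m+1), F p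
      = uT t j - ((lamT t)⁻¹) ^ (m+1) * ((H ^ (m+1)) *ᵥ uT t) j := by
    intro m
    have h1 := congrFun (hNv m) j
    rw [Pi.add_apply, Finset.sum_apply] at h1
    simp only [Pi.smul_apply, smul_eq_mul] at h1
    simp only [hFdef]
    linarith [h1]
  have htail0 : Filter.Tendsto
      (fun m : ℕ => ((lamT t)⁻¹) ^ (m+1) * ((H ^ (m+1)) *ᵥ uT t) j)
      Filter.atTop (nhds 0) := by
    have hb : ∀ m : ℕ, |((lamT t)⁻¹) ^ (m+1) * ((H ^ (m+1)) *ᵥ uT t) j|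
        ≤ (|(lamT t)⁻¹| * ‖H‖) ^ (m+1) := by
      intro m
      rw [abs_mul, abs_pow, mul_pow]
      have h2 := pow_mulVec_coord H (m+1) (uT t) j
      rw [hnuT, mul_one] at h2
      exact mul_le_mul_of_nonneg_left h2 (pow_nonneg (abs_nonneg _) _)
    have hg : Filter.Tendsto (fun m : ℕ => (|(lamT t)⁻¹| * ‖H‖) ^ (m+1))
        Filter.atTop (nhds 0) := by
      have h0 : (0:ℝ) ≤ |(lamT t)⁻¹| * ‖H‖ := by positivity
      exact (tendsto_pow_atTop_nhds_zero_of_lt_one h0 hr1).comp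
        (Filter.tendsto_add_atTop_nat 1)
    refine squeeze_zero_norm (fun m => ?_) hg
    rw [Real.norm_eq_abs]
    exact hb m
  have hhs : HasSum F (uT t j) := by
    have h1 : Filter.Tendsto (fun m : ℕ => ∑ p ∈ Finset.range (m+1), F p)
        Filter.atTop (nhds (uT t j)) := by
      have h2 : Filter.Tendsto
          (fun m : ℕ => uT t j - ((lamT t)⁻¹) ^ (m+1) * ((H ^ (m+1)) *ᵥ uT t) j)
          Filter.atTop (nhds (uT t j - 0)) := Filter.Tendsto.sub tendsto_const_nhds htail0
      rw [sub_zero] at h2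
      exact h2.congr (fun m => (hpart m).symm)
    have h4 : Filter.Tendsto (fun m : ℕ => ∑ p ∈ Finset.range (m+1), F p)
        Filter.atTop (nhds (∑' p, F p)) :=
      hFsum.hasSum.tendsto_sum_nat.comp (Filter.tendsto_add_atTop_nat 1)
    have h5 : ∑' p, F p = uT t j := tendsto_nhds_unique h4 h1
    rw [← h5]
    exact hFsum.hasSum
  -- decompose via eigenbasis
  have hy : P *ᵥ uT t = ∑ s, (lam s * c s) • u s := by
    funext i
    rw [Finset.sum_apply]
    rw [expansion u huon (P *ᵥ uT t) i]
    refine Finset.sum_congr rfl (fun s _ => ?_)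
    rw [hPdot s, Pi.smul_apply, smul_eq_mul]
  have hFs : ∀ p : ℕ, F p
      = ∑ s, (lam s * c s) * (((lamT t)⁻¹) ^ (p+1) * ((H ^ p) *ᵥ u s) j) := by
    intro p
    simp only [hFdef]
    have h1 : (H ^ p) *ᵥ (P *ᵥ uT t) = ∑ s, (lam s * c s) • ((H ^ p) *ᵥ u s) := by
      rw [hy, ← Matrix.mulVecLin_apply, map_sum]
      refine Finset.sum_congr rfl (fun s _ => ?_)
      rw [_root_.map_smul, Matrix.mulVecLin_apply]
    rw [h1, Finset.sum_apply, Finset.mul_sum]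
    refine Finset.sum_congr rfl (fun s _ => ?_)
    rw [Pi.smul_apply, smul_eq_mul]
    ring
  have hbase_s : ∀ s, Summable (fun p : ℕ => ((lamT t)⁻¹) ^ (p+1) * ((H ^ p) *ᵥ u s) j) :=
    fun s => (hsum1 (u s)).of_abs
  have hGsum : ∀ s : Fin n,
      Summable (fun p : ℕ => (lam s * c s) * (((lamT t)⁻¹) ^ (p+1) * ((H ^ p) *ᵥ u s) j)) :=
    fun s => (hbase_s s).mul_left _
  have hkey0 : uT t j = ∑ s, (lam s * c s) * (((lamT t)⁻¹) * (u s j + ρ s)) := by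
    have h1 : uT t j = ∑' p, F p := hhs.tsum_eq.symm
    have h2 : ∑' (p : ℕ), F p
        = ∑' (p : ℕ), ∑ s, (lam s * c s) * (((lamT t)⁻¹) ^ (p+1) * ((H ^ p) *ᵥ u s) j) :=
      tsum_congr hFs
    have h3 : ∑' (p : ℕ), ∑ s, (lam s * c s) * (((lamT t)⁻¹) ^ (p+1) * ((H ^ p) *ᵥ u s) j)
        = ∑ s, ∑' (p : ℕ), (lam s * c s) * (((lamT t)⁻¹) ^ (p+1) * ((H ^ p) *ᵥ u s) j) :=
      Summable.tsum_finsetSum (fun s _ => hGsum s)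
    have h4 : ∀ s : Fin n,
        ∑' (p : ℕ), (lam s * c s) * (((lamT t)⁻¹) ^ (p+1) * ((H ^ p) *ᵥ u s) j)
          = (lam s * c s) * (((lamT t)⁻¹) * (u s j + ρ s)) := by
      intro s
      rw [tsum_mul_left]
      congr 1
      rw [Summable.tsum_eq_zero_add (hbase_s s)]
      have h6 : ∀ p : ℕ, ((lamT t)⁻¹) ^ (p+1+1) * ((H ^ (p+1)) *ᵥ u s) j
          = (lamT t)⁻¹ * (((lamT t)⁻¹) ^ (p+1) * ((H ^ (p+1)) *ᵥ u s) j) := by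
        intro p; ring
      rw [tsum_congr h6, tsum_mul_left]
      simp only [hρdef]
      rw [pow_one, pow_zero, Matrix.one_mulVec]
      ring
    rw [h1, h2, h3]
    exact Finset.sum_congr rfl (fun s _ => h4 s)
  -- final assembly
  set ζ : ℝ := if 0 ≤ c t then (1:ℝ) else -1 with hζdef
  have hζ1 : ζ = 1 ∨ ζ = -1 := by rw [hζdef]; split_ifs <;> simp
  have hmin : min |uT t j - u t j| |uT t j + u t j| ≤ |uT t j - ζ * u t j| := by
    rcases hζ1 with h | h
    · rw [h, one_mul]; exact min_le_left _ _
    · rw [h]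
      have h7 : uT t j - (-1) * u t j = uT t j + u t j := by ring
      rw [h7]; exact min_le_right _ _
  have hsplitc : c t * c t + ∑ s ∈ Finset.univ.erase t, c s * c s = 1 := by
    rw [Finset.add_sum_erase _ (fun s => c s * c s) (Finset.mem_univ t)]
    exact hc1
  have hC5 : |c t - ζ| ≤ ∑ s ∈ Finset.univ.erase t, c s * c s := by
    have hb := abs_le.mp (hcle t)
    rw [hζdef]
    split_ifs with h
    · rw [abs_le]; constructor <;> nlinarith [hb.1, hb.2, hsplitc]
    · push_neg at h
      rw [abs_le]; constructor <;> nlinarith [hb.1, hb.2, hsplitc]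
  have hlala : |lam t| * |(lamT t)⁻¹| ≤ 2 := by
    calc |lam t| * |(lamT t)⁻¹| ≤ |lam t| * (2 / |lam t|) :=
          mul_le_mul_of_nonneg_left hq (le_of_lt hlpos)
    _ = 2 := by field_simp
  have hcoefB : |lam t * c t * (lamT t)⁻¹| ≤ 2 := by
    rw [abs_mul, abs_mul]
    calc |lam t| * |c t| * |(lamT t)⁻¹| ≤ |lam t| * 1 * |(lamT t)⁻¹| :=
          mul_le_mul_of_nonneg_right
            (mul_le_mul_of_nonneg_left (hcle t) (abs_nonneg _)) (abs_nonneg _)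
    _ = |lam t| * |(lamT t)⁻¹| := by ring
    _ ≤ 2 := hlala
  have hcoefA : |lam t * c t * (lamT t)⁻¹ - ζ| ≤ 4 * ‖H‖ ^ 2 / Δ ^ 2 + 2 * ‖H‖ / |lam t| := by
    have hid : lam t * c t * (lamT t)⁻¹ - ζ
        = (lam t * (lamT t)⁻¹ - 1) * c t + (c t - ζ) := by ring
    have h2 : |lam t * (lamT t)⁻¹ - 1| ≤ 2 * ‖H‖ / |lam t| := by
      have h3 : lam t * (lamT t)⁻¹ - 1 = (lam t - lamT t) * (lamT t)⁻¹ := by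
        field_simp
      rw [h3, abs_mul, abs_sub_comm]
      calc |lamT t - lam t| * |(lamT t)⁻¹| ≤ ‖H‖ * (2 / |lam t|) :=
            mul_le_mul hW hq (abs_nonneg _) hε0
      _ = 2 * ‖H‖ / |lam t| := by ring
    have h4 : |(lam t * (lamT t)⁻¹ - 1) * c t| ≤ 2 * ‖H‖ / |lam t| := by
      rw [abs_mul]
      exact le_trans (mul_le_of_le_one_right (abs_nonneg _) (hcle t)) h2
    calc |lam t * c t * (lamT t)⁻¹ - ζ| ≤ |(lam t * (lamT t)⁻¹ - 1) * c t| + |c t - ζ| := by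
          rw [hid]; exact abs_add_le _ _
    _ ≤ 4 * ‖H‖ ^ 2 / Δ ^ 2 + 2 * ‖H‖ / |lam t| := by linarith [le_trans hC5 hC3]
  have hB2 : ∀ s, s ≠ t → |lam s * c s * (lamT t)⁻¹|
      ≤ 4 * Real.sqrt 2 * ‖H‖ / Δ * |lam s / lam t| := by
    intro s hs
    have h1 : |lam s| = |lam s / lam t| * |lam t| := by
      rw [abs_div, div_mul_cancel₀ _ (ne_of_gt hlpos)]
    calc |lam s * c s * (lamT t)⁻¹| = |lam s| * |c s| * |(lamT t)⁻¹| := by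
          rw [abs_mul, abs_mul]
    _ = |lam s / lam t| * ((|lam t| * |(lamT t)⁻¹|) * |c s|) := by rw [h1]; ring
    _ ≤ |lam s / lam t| * (2 * (2 * Real.sqrt 2 * ‖H‖ / Δ)) := by
        refine mul_le_mul_of_nonneg_left ?_ (abs_nonneg _)
        refine mul_le_mul hlala (hC2 s hs) (abs_nonneg _) (by norm_num)
    _ = 4 * Real.sqrt 2 * ‖H‖ / Δ * |lam s / lam t| := by ring
  have hsplit2 : uT t j - ζ * u t j
      = (lam t * c t * (lamT t)⁻¹ - ζ) * u t j + (lam t * c t * (lamT t)⁻¹) * ρ t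
        + ∑ s ∈ Finset.univ.erase t, (lam s * c s * (lamT t)⁻¹) * (u s j + ρ s) := by
    have h5 : uT t j = (lam t * c t) * (((lamT t)⁻¹) * (u t j + ρ t))
        + ∑ s ∈ Finset.univ.erase t, (lam s * c s) * (((lamT t)⁻¹) * (u s j + ρ s)) := by
      rw [hkey0, ← Finset.add_sum_erase _ _ (Finset.mem_univ t)]
    have h6 : ∑ s ∈ Finset.univ.erase t, (lam s * c s) * (((lamT t)⁻¹) * (u s j + ρ s))
        = ∑ s ∈ Finset.univ.erase t, (lam s * c s * (lamT t)⁻¹) * (u s j + ρ s) :=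
      Finset.sum_congr rfl (fun s _ => by ring)
    rw [h5, h6]
    ring
  have hCsum : |∑ s ∈ Finset.univ.erase t, (lam s * c s * (lamT t)⁻¹) * (u s j + ρ s)|
      ≤ (4 * Real.sqrt 2 * ‖H‖ / Δ)
        * ∑ s ∈ Finset.univ.erase t, |lam s / lam t| * (|u s j| + xi (u s) j) := by
    calc |∑ s ∈ Finset.univ.erase t, (lam s * c s * (lamT t)⁻¹) * (u s j + ρ s)|
        ≤ ∑ s ∈ Finset.univ.erase t, |(lam s * c s * (lamT t)⁻¹) * (u s j + ρ s)| :=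
          Finset.abs_sum_le_sum_abs _ _
    _ ≤ ∑ s ∈ Finset.univ.erase t,
          (4 * Real.sqrt 2 * ‖H‖ / Δ) * (|lam s / lam t| * (|u s j| + xi (u s) j)) := by
        refine Finset.sum_le_sum (fun s hs => ?_)
        rw [abs_mul]
        have hb1 : |u s j + ρ s| ≤ |u s j| + xi (u s) j := by
          calc |u s j + ρ s| ≤ |u s j| + |ρ s| := abs_add_le _ _
          _ ≤ |u s j| + xi (u s) j := by linarith [hρle s]
        have hbn : (0:ℝ) ≤ 4 * Real.sqrt 2 * ‖H‖ / Δ * |lam s / lam t| :=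
          mul_nonneg (div_nonneg (by positivity) hΔpos.le) (abs_nonneg _)
        calc |lam s * c s * (lamT t)⁻¹| * |u s j + ρ s|
            ≤ (4 * Real.sqrt 2 * ‖H‖ / Δ * |lam s / lam t|) * (|u s j| + xi (u s) j) :=
              mul_le_mul (hB2 s (Finset.mem_erase.mp hs).1) hb1 (abs_nonneg _) hbn
        _ = (4 * Real.sqrt 2 * ‖H‖ / Δ) * (|lam s / lam t| * (|u s j| + xi (u s) j)) := by
              ring
    _ = (4 * Real.sqrt 2 * ‖H‖ / Δ)
        * ∑ s ∈ Finset.univ.erase t, |lam s / lam t| * (|u s j| + xi (u s) j) := by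
        rw [← Finset.mul_sum]
  have hA : |(lam t * c t * (lamT t)⁻¹ - ζ) * u t j|
      ≤ (4 * ‖H‖ ^ 2 / Δ ^ 2 + 2 * ‖H‖ / |lam t|) * |u t j| := by
    rw [abs_mul]
    exact mul_le_mul_of_nonneg_right hcoefA (abs_nonneg _)
  have hB : |(lam t * c t * (lamT t)⁻¹) * ρ t| ≤ 2 * xi (u t) j := by
    rw [abs_mul]
    exact mul_le_mul hcoefB (hρle t) (abs_nonneg _) (by norm_num)
  have hfinal : |uT t j - ζ * u t j|
      ≤ (4 * ‖H‖ ^ 2 / Δ ^ 2 + 2 * ‖H‖ / |lam t|) * |u t j| + 2 * xi (u t) j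
        + (4 * Real.sqrt 2 * ‖H‖ / Δ)
          * ∑ s ∈ Finset.univ.erase t, |lam s / lam t| * (|u s j| + xi (u s) j) := by
    rw [hsplit2]
    have habs2 := abs_add_three ((lam t * c t * (lamT t)⁻¹ - ζ) * u t j)
      ((lam t * c t * (lamT t)⁻¹) * ρ t)
      (∑ s ∈ Finset.univ.erase t, (lam s * c s * (lamT t)⁻¹) * (u s j + ρ s))
    linarith [hA, hB, hCsum, habs2]
  exact le_trans hmin hfinal
end

section
/- Consider a dis-assortative BTSBM (p_0 < p_1 < … < p_d), and define λ_{d,0} = p_0 + Σ_{r=1}^{d} 2^{r−1} p_r and λ_{d,q} = p_0 + Σ_{r=1}^{d−q} 2^{r−1} p_r − 2^{d−q} p_{d−q+1} for q ∈ [d]. Then λ_{d,1} < λ_{d,2} < … < λ_{d,d} < 0 < λ_{d,0}, and |λ_{d,1}| > |λ_{d,q}| for every q with 2 ≤ q ≤ d, so that m λ_{d,1} is the eigenvalue of P̃ = Z B Z^T of second largest absolute value in the balanced case. Moreover, in the scaling parametrization (p_0,…,p_d) = ρ_n(1, a_1, …, a_d), this eigenvalue λ_2 satisfies |λ_2| =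 m |1 + Σ_{r=1}^{d−1} 2^{r−1} a_r − 2^{d−1} a_d| ρ_n ≥ n ρ_n (a_d − a_{d−1})/2. -/
open Finset Matrix Polynomial

namespace BTSBM

/-- `μ` is an eigenvalue of second largest absolute value of `M`: there is a top
eigenvalue `μ₁` (of largest absolute value among all eigenvalues, with multiplicity),
and after removing one copy of `μ₁`, `μ` has the largest absolute value among the
remaining eigenvalues. -/
def IsSecondAbsEigenval {N : ℕ} (M : Matrix (Fin N) (Fin N) ℝ) (μ : ℝ) : Prop :=
  ∃ μ₁ ∈ M.charpoly.roots, (∀ ν ∈ M.charpoly.roots, |ν| ≤ |μ₁|) ∧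
    μ ∈ M.charpoly.roots.erase μ₁ ∧ ∀ ν ∈ M.charpoly.roots.erase μ₁, |ν| ≤ |μ|

lemma firstDiff_cons_ne {e : ℕ} {b b' : Bool} (hb : b ≠ b') (x y : Fin e → Bool) :
    firstDiff (Fin.cons b x) (Fin.cons b' y) = 0 := by
  apply Nat.sInf_eq_zero.mpr
  left
  exact ⟨Nat.succ_pos e, by simpa using hb⟩

lemma firstDiff_cons_eq {e : ℕ} (b : Bool) {x y : Fin e → Bool} (hxy : x ≠ y) :
    firstDiff (Fin.cons b x) (Fin.cons b y) = firstDiff x y + 1 := by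
  unfold firstDiff
  have hS : {q : ℕ | ∃ h : q < e, x ⟨q, h⟩ ≠ y ⟨q, h⟩}.Nonempty := by
    by_contra h
    apply hxy
    funext i
    by_contra hi
    exact h ⟨i.1, ⟨i.2, by simpa using hi⟩⟩
  have hmem := Nat.sInf_mem hS
  obtain ⟨hlt, hne⟩ := hmem
  set F := sInf {q : ℕ | ∃ h : q < e, x ⟨q, h⟩ ≠ y ⟨q, h⟩} with hF
  apply le_antisymm
  · apply Nat.sInf_le
    refine ⟨by omega, ?_⟩
    have : (⟨F + 1, by omega⟩ : Fin (e+1)) = Fin.succ ⟨F, hlt⟩ := rfl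
    rw [this]
    rw [Fin.cons_succ, Fin.cons_succ]; exact hne
  · apply le_csInf
    · exact ⟨F + 1, ⟨by omega, by
        have : (⟨F + 1, by omega⟩ : Fin (e+1)) = Fin.succ ⟨F, hlt⟩ := rfl
        rw [this]; rw [Fin.cons_succ, Fin.cons_succ]; exact hne⟩⟩
    · rintro k ⟨hk, hkne⟩
      match k, hk with
      | 0, hk => simp [show (⟨0, hk⟩ : Fin (e+1)) = 0 from rfl] at hkne
      | (j+1), hk =>
        have : (⟨j + 1, hk⟩ : Fin (e+1)) = Fin.succ ⟨j, by omega⟩ := rfl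
        rw [this] at hkne
        simp only [Fin.cons_succ] at hkne
        have : F ≤ j := Nat.sInf_le ⟨by omega, hkne⟩
        omega

/-- splitting equivalence -/
def splitEquiv (e : ℕ) : ((Fin e → Bool) ⊕ (Fin e → Bool)) ≃ (Fin (e+1) → Bool) where
  toFun s := Sum.elim (fun x => Fin.cons false x) (fun x => Fin.cons true x) s
  invFun f := if f 0 then Sum.inr (Fin.tail f) else Sum.inl (Fin.tail f)
  left_inv := by rintro (x|x) <;> simp
  right_inv := by
    intro f
    have h0 := Fin.cons_self_tail f
    by_cases h : f 0 = true
    · simp only [h, if_true, Sum.elim_inr]; rw [← h]; exact h0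
    · have h' : f 0 = false := by simpa using h
      simp only [h', Bool.false_eq_true, if_false, Sum.elim_inl]; rw [← h']; exact h0

lemma splitEquiv_inl (e : ℕ) (x : Fin e → Bool) :
    splitEquiv e (Sum.inl x) = Fin.cons false x := rfl

lemma splitEquiv_inr (e : ℕ) (x : Fin e → Bool) :
    splitEquiv e (Sum.inr x) = Fin.cons true x := rfl

lemma Bmat_blocks (e : ℕ) (p : ℕ → ℝ) :
    (Bmat (e+1) p).submatrix (splitEquiv e) (splitEquiv e) =
      fromBlocks (Bmat e p) (Matrix.of fun _ _ => p (e+1))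
        (Matrix.of fun _ _ => p (e+1)) (Bmat e p) := by
  have key : ∀ (b : Bool) (x y : Fin e → Bool),
      Bmat (e+1) p (Fin.cons b x : Fin (e+1) → Bool) (Fin.cons b y : Fin (e+1) → Bool) = Bmat e p x y := by
    intro b x y
    by_cases hxy : x = y
    · subst hxy; simp [Bmat]
    · have h1 : (Fin.cons b x : Fin (e+1) → Bool) ≠ Fin.cons b y := by
        intro h; exact hxy (by funext i; have := congrFun h i.succ; simpa using this)
      simp only [Bmat, Matrix.of_apply, if_neg h1, if_neg hxy,
        firstDiff_cons_eq b hxy]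
      congr 1
      omega
  have key2 : ∀ (b b' : Bool) (_ : b ≠ b') (x y : Fin e → Bool),
      Bmat (e+1) p (Fin.cons b x : Fin (e+1) → Bool) (Fin.cons b' y : Fin (e+1) → Bool) = p (e+1) := by
    intro b b' hb x y
    have h1 : (Fin.cons b x : Fin (e+1) → Bool) ≠ Fin.cons b' y := by
      intro h; exact hb (by have := congrFun h 0; simpa using this)
    simp only [Bmat, Matrix.of_apply, if_neg h1, firstDiff_cons_ne hb, Nat.sub_zero]
  ext i j
  rcases i with x | x <;> rcases j with y | y <;>
    simp [Matrix.submatrix_apply, splitEquiv_inl, splitEquiv_inr, fromBlocks,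
      key, key2 false true (by simp), key2 true false (by simp)]

section blockdet

variable {α : Type*} [DecidableEq α] [Fintype α] {R : Type*} [CommRing R]

lemma det_fromBlocks_comm (P Q : Matrix α α R) :
    (fromBlocks P Q Q P).det = (P + Q).det * (P - Q).det := by
  have h : (fromBlocks 1 1 0 1 : Matrix (α ⊕ α) (α ⊕ α) R) * fromBlocks P Q Q P *
      fromBlocks 1 (-1) 0 1 = fromBlocks (P + Q) 0 Q (P - Q) := by
    rw [fromBlocks_multiply, fromBlocks_multiply, fromBlocks_inj]
    refine ⟨?_, ?_, ?_, ?_⟩ <;>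
      simp [Matrix.mul_one, Matrix.one_mul, Matrix.zero_mul, Matrix.mul_zero,
        Matrix.mul_neg, Matrix.neg_mul, sub_eq_add_neg] <;> abel
  have hd := congrArg Matrix.det h
  rw [det_mul, det_mul, det_fromBlocks_zero₂₁, det_fromBlocks_zero₂₁,
    det_fromBlocks_zero₁₂, det_one] at hd
  simpa using hd

lemma charmatrix_add' (A C : Matrix α α R) :
    charmatrix (A + C) = charmatrix A + -(C.map Polynomial.C) := by
  apply Matrix.ext; intro i j
  simp only [charmatrix_apply, Matrix.add_apply, Matrix.neg_apply, Matrix.map_apply, map_add]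
  ring

lemma charmatrix_sub' (A C : Matrix α α R) :
    charmatrix (A - C) = charmatrix A - -(C.map Polynomial.C) := by
  apply Matrix.ext; intro i j
  simp only [charmatrix_apply, Matrix.sub_apply, Matrix.neg_apply, Matrix.map_apply, map_sub]
  ring

lemma charpoly_fromBlocks_comm (A C : Matrix α α R) :
    (fromBlocks A C C A).charpoly = (A + C).charpoly * (A - C).charpoly := by
  unfold Matrix.charpoly
  rw [charmatrix_fromBlocks, det_fromBlocks_comm, charmatrix_add', charmatrix_sub']

lemma charmatrix_eq' (M : Matrix α α R) :
    charmatrix M = (Matrix.diagonal fun _ => (X : R[X])) - M.map Polynomial.C := by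
  apply Matrix.ext; intro i j
  rw [charmatrix_apply, Matrix.sub_apply, Matrix.map_apply]

lemma charpoly_mul_comm_rect {β : Type*} [DecidableEq β] [Fintype β]
    (A : Matrix α β R) (B : Matrix β α R) :
    (A * B).charpoly * X ^ (Fintype.card β) = X ^ (Fintype.card α) * (B * A).charpoly := by
  classical
  set A' := A.map (Polynomial.C : R →+* R[X]) with hA'
  set B' := B.map (Polynomial.C : R →+* R[X]) with hB'
  set Dα : Matrix α α R[X] := Matrix.diagonal fun _ => X with hDα
  set Dβ : Matrix β β R[X] := Matrix.diagonal fun _ => X with hDβ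
  have hAB : A' * B' = (A * B).map (Polynomial.C : R →+* R[X]) := (Matrix.map_mul).symm
  have hBA : B' * A' = (B * A).map (Polynomial.C : R →+* R[X]) := (Matrix.map_mul).symm
  have hcomm : ∀ (N : Matrix β α R[X]), N * Dα = Dβ * N := by
    intro N
    apply Matrix.ext; intro i j
    rw [Matrix.mul_diagonal, Matrix.diagonal_mul, mul_comm]
  have hUV : (fromBlocks Dα A' B' 1 : Matrix (α ⊕ β) (α ⊕ β) R[X]) *
      fromBlocks 1 0 (-B') Dβ = fromBlocks (charmatrix (A * B)) (A' * Dβ) 0 Dβ := by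
    rw [fromBlocks_multiply, fromBlocks_inj, charmatrix_eq', ← hAB]
    refine ⟨by rw [Matrix.mul_one, Matrix.mul_neg, sub_eq_add_neg], by simp, ?_, by simp⟩
    rw [Matrix.mul_one, Matrix.one_mul, add_neg_cancel]
  have hVU : (fromBlocks 1 0 (-B') Dβ : Matrix (α ⊕ β) (α ⊕ β) R[X]) *
      fromBlocks Dα A' B' 1 = fromBlocks Dα A' 0 (charmatrix (B * A)) := by
    rw [fromBlocks_multiply, fromBlocks_inj, charmatrix_eq', ← hBA]
    refine ⟨by simp, by simp, ?_, ?_⟩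
    · rw [Matrix.neg_mul, hcomm B', neg_add_cancel]
    · rw [Matrix.neg_mul, Matrix.mul_one, sub_eq_add_neg, add_comm]
  have e1 : (A * B).charpoly * X ^ (Fintype.card β) =
      det (fromBlocks Dα A' B' 1) * det (fromBlocks 1 0 (-B') Dβ) := by
    rw [← det_mul, hUV, det_fromBlocks_zero₂₁, hDβ, det_diagonal, Finset.prod_const,
      Finset.card_univ]
    unfold Matrix.charpoly
    rfl
  have e2 : X ^ (Fintype.card α) * (B * A).charpoly =
      det (fromBlocks 1 0 (-B') Dβ) * det (fromBlocks Dα A' B' 1) := by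
    rw [← det_mul, hVU, det_fromBlocks_zero₂₁, hDα, det_diagonal, Finset.prod_const,
      Finset.card_univ]
    unfold Matrix.charpoly
    rfl
  rw [e1, e2, mul_comm]

end blockdet

lemma lamB_zero (d : ℕ) (p : ℕ → ℝ) :
    lamB d p 0 = p 0 + ∑ r ∈ Finset.Icc 1 d, 2 ^ (r - 1) * p r := if_pos rfl

lemma lamB_pos (d : ℕ) (p : ℕ → ℝ) {q : ℕ} (hq : q ≠ 0) :
    lamB d p q = p 0 + (∑ r ∈ Finset.Icc 1 (d - q), 2 ^ (r - 1) * p r)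
      - 2 ^ (d - q) * p (d - q + 1) := if_neg hq

lemma sum_geom (e : ℕ) : ∑ r ∈ Finset.Icc 1 e, (2:ℝ)^(r-1) = 2^e - 1 := by
  induction e with
  | zero => simp
  | succ k ih =>
    rw [Finset.sum_Icc_succ_top (by omega), ih, Nat.add_sub_cancel]
    ring

lemma lamB_plus_zero (e : ℕ) (p : ℕ → ℝ) :
    lamB e (fun r => p r + p (e+1)) 0 = lamB (e+1) p 0 := by
  rw [lamB_zero, lamB_zero, Finset.sum_Icc_succ_top (by omega), Nat.add_sub_cancel]
  simp only [mul_add, Finset.sum_add_distrib, ← Finset.sum_mul, sum_geom]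
  ring

lemma lamB_minus_zero (e : ℕ) (p : ℕ → ℝ) :
    lamB e (fun r => p r - p (e+1)) 0 = lamB (e+1) p 1 := by
  rw [lamB_zero, lamB_pos _ _ one_ne_zero, Nat.add_sub_cancel]
  simp only [mul_sub, Finset.sum_sub_distrib, ← Finset.sum_mul, sum_geom]
  ring

lemma lamB_plus (e : ℕ) (p : ℕ → ℝ) (q : ℕ) (h1 : 1 ≤ q) (h2 : q ≤ e) :
    lamB e (fun r => p r + p (e+1)) q = lamB (e+1) p (q+1) := by
  obtain ⟨k, hk⟩ := Nat.exists_eq_add_of_le h2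
  rw [lamB_pos _ _ (by omega), lamB_pos _ _ (by omega),
    show e - q = k by omega, show e + 1 - (q+1) = k by omega]
  simp only [mul_add, Finset.sum_add_distrib, ← Finset.sum_mul, sum_geom]
  ring

lemma lamB_minus (e : ℕ) (p : ℕ → ℝ) (q : ℕ) (h1 : 1 ≤ q) (h2 : q ≤ e) :
    lamB e (fun r => p r - p (e+1)) q = lamB (e+1) p (q+1) := by
  obtain ⟨k, hk⟩ := Nat.exists_eq_add_of_le h2
  rw [lamB_pos _ _ (by omega), lamB_pos _ _ (by omega),
    show e - q = k by omega, show e + 1 - (q+1) = k by omega]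
  simp only [mul_sub, Finset.sum_sub_distrib, ← Finset.sum_mul, sum_geom]
  ring

theorem charpoly_Bmat : ∀ (d : ℕ) (p : ℕ → ℝ),
    (Bmat d p).charpoly =
      (X - C (lamB d p 0)) * ∏ q ∈ Finset.Icc 1 d, (X - C (lamB d p q)) ^ 2^(q-1) := by
  intro d
  induction d with
  | zero =>
    intro p
    have h1 : (Bmat 0 p).charpoly = X - C (p 0) := by
      unfold Matrix.charpoly
      rw [Matrix.det_unique, charmatrix_apply_eq]
      congr 1
    rw [h1, lamB_zero]
    simp
  | succ e ih =>
    intro p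
    have hre : (Bmat (e+1) p).charpoly =
        (fromBlocks (Bmat e p) (Matrix.of fun _ _ => p (e+1))
          (Matrix.of fun _ _ => p (e+1)) (Bmat e p)).charpoly := by
      rw [← Matrix.charpoly_reindex (splitEquiv e).symm (Bmat (e+1) p), Matrix.reindex_apply,
        Equiv.symm_symm, Bmat_blocks]
    have hplus : Bmat e p + (Matrix.of fun _ _ => p (e+1)) = Bmat e (fun r => p r + p (e+1)) := by
      apply Matrix.ext; intro x y
      by_cases h : x = y <;> simp [Bmat, h]
    have hminus : Bmat e p - (Matrix.of fun _ _ => p (e+1)) = Bmat e (fun r => p r - p (e+1)) := by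
      apply Matrix.ext; intro x y
      by_cases h : x = y <;> simp [Bmat, h]
    rw [hre, charpoly_fromBlocks_comm, hplus, hminus, ih, ih, lamB_plus_zero, lamB_minus_zero]
    have h3 : ∏ q ∈ Finset.Icc 1 e, (X - C (lamB e (fun r => p r + p (e+1)) q)) ^ 2^(q-1)
        = ∏ q ∈ Finset.Icc 1 e, (X - C (lamB (e+1) p (q+1))) ^ 2^(q-1) := by
      apply Finset.prod_congr rfl; intro q hq
      rw [lamB_plus e p q (Finset.mem_Icc.mp hq).1 (Finset.mem_Icc.mp hq).2]
    have h4 : ∏ q ∈ Finset.Icc 1 e, (X - C (lamB e (fun r => p r - p (e+1)) q)) ^ 2^(q-1)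
        = ∏ q ∈ Finset.Icc 1 e, (X - C (lamB (e+1) p (q+1))) ^ 2^(q-1) := by
      apply Finset.prod_congr rfl; intro q hq
      rw [lamB_minus e p q (Finset.mem_Icc.mp hq).1 (Finset.mem_Icc.mp hq).2]
    rw [h3, h4]
    have hsplit : (Finset.Icc 1 (e+1)) = insert 1 (Finset.Icc 2 (e+1)) := by
      ext z; simp only [Finset.mem_Icc, Finset.mem_insert]; omega
    have h1notin : (1:ℕ) ∉ Finset.Icc 2 (e+1) := by simp
    have hmap : ∏ q ∈ Finset.Icc 2 (e+1), (X - C (lamB (e+1) p q)) ^ 2^(q-1)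
        = ∏ q ∈ Finset.Icc 1 e, (X - C (lamB (e+1) p (q+1))) ^ 2^q := by
      rw [show (Finset.Icc 2 (e+1) : Finset ℕ)
          = (Finset.Icc 1 e).map (addRightEmbedding 1) by rw [Finset.map_add_right_Icc]]
      rw [Finset.prod_map]
      apply Finset.prod_congr rfl; intro q hq
      simp only [addRightEmbedding_apply, Nat.add_sub_cancel]
    have hdbl : ∏ q ∈ Finset.Icc 1 e, (X - C (lamB (e+1) p (q+1))) ^ 2^q
        = (∏ q ∈ Finset.Icc 1 e, (X - C (lamB (e+1) p (q+1))) ^ 2^(q-1))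
          * ∏ q ∈ Finset.Icc 1 e, (X - C (lamB (e+1) p (q+1))) ^ 2^(q-1) := by
      rw [← Finset.prod_mul_distrib]
      apply Finset.prod_congr rfl; intro q hq
      rw [← pow_add]
      congr 1
      have hq1 : 1 ≤ q := (Finset.mem_Icc.mp hq).1
      have h0 : q - 1 + 1 = q := by omega
      have h2 : 2^(q-1) * 2 = 2^q := by rw [← pow_succ, h0]
      omega
    rw [hsplit, Finset.prod_insert h1notin, hmap, hdbl]
    ring

lemma ZtZ (n d m : ℕ) (c : Fin n → Fin d → Bool) (hbal : Balanced n d m c) :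
    (Zmat n d c)ᵀ * Zmat n d c = (m : ℝ) • 1 := by
  apply Matrix.ext; intro x y
  have hent : ((Zmat n d c)ᵀ * Zmat n d c) x y
      = ∑ i, (if c i = x ∧ c i = y then (1:ℝ) else 0) := by
    rw [Matrix.mul_apply]
    apply Finset.sum_congr rfl
    intro i _
    by_cases hx : c i = x <;> by_cases hy : c i = y <;>
      simp [Zmat, Matrix.transpose_apply, hx, hy]
  rw [hent]
  by_cases h : x = y
  · subst h
    simp only [and_self]
    rw [Finset.sum_boole, Matrix.smul_apply, Matrix.one_apply_eq, smul_eq_mul, mul_one]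
    exact_mod_cast congrArg (Nat.cast : ℕ → ℝ) (hbal x)
  · rw [Finset.sum_eq_zero, Matrix.smul_apply, Matrix.one_apply_ne h, smul_zero]
    intro i _
    rw [if_neg]
    rintro ⟨rfl, rfl⟩
    exact h rfl

lemma smul_Bmat (d : ℕ) (p : ℕ → ℝ) (t : ℝ) :
    t • Bmat d p = Bmat d (fun r => t * p r) := by
  apply Matrix.ext; intro x y
  by_cases h : x = y <;> simp [Bmat, h]

lemma lamB_smul (d : ℕ) (p : ℕ → ℝ) (t : ℝ) (q : ℕ) :
    lamB d (fun r => t * p r) q = t * lamB d p q := by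
  have hs : ∀ k, ∑ r ∈ Finset.Icc 1 k, (2:ℝ)^(r-1) * (t * p r)
      = t * ∑ r ∈ Finset.Icc 1 k, 2^(r-1) * p r := by
    intro k; rw [Finset.mul_sum]; apply Finset.sum_congr rfl; intros; ring
  unfold lamB
  split <;> rw [hs] <;> ring

lemma roots_charpoly_Bmat (d : ℕ) (p : ℕ → ℝ) :
    (Bmat d p).charpoly.roots = (lamB d p 0) ::ₘ
      ∑ q ∈ Finset.Icc 1 d, Multiset.replicate (2^(q-1)) (lamB d p q) := by
  rw [charpoly_Bmat]
  have h1 : (X - C (lamB d p 0)) ≠ 0 := (monic_X_sub_C _).ne_zero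
  have hf : ∀ q ∈ Finset.Icc 1 d, ((X - C (lamB d p q)) ^ 2^(q-1)).Monic :=
    fun q _ => (monic_X_sub_C _).pow _
  have h2 : (∏ q ∈ Finset.Icc 1 d, (X - C (lamB d p q)) ^ 2^(q-1)) ≠ 0 :=
    (Polynomial.monic_prod_of_monic _ _ hf).ne_zero
  rw [Polynomial.roots_mul (mul_ne_zero h1 h2), Polynomial.roots_X_sub_C,
    Polynomial.roots_prod _ _ h2]
  rw [Multiset.singleton_add]
  congr 1
  have hb : ∀ (g : ℕ → Multiset ℝ),
      (Finset.Icc 1 d).val.bind g = ∑ q ∈ Finset.Icc 1 d, g q := by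
    intro g; rw [Finset.sum_eq_multiset_sum]; rfl
  rw [hb]
  apply Finset.sum_congr rfl
  intro q _
  rw [Polynomial.roots_pow, Polynomial.roots_X_sub_C, Multiset.nsmul_singleton]

theorem statement14 (d m : ℕ) (hd : 1 ≤ d) (hm : 0 < m)
    (p : ℕ → ℝ) (hp : ∀ r ≤ d, p r ∈ Set.Icc (0:ℝ) 1)
    -- dis-assortative: p₀ < p₁ < … < p_d
    (hdis : ∀ r < d, p r < p (r + 1))
    (n : ℕ) (hn : n = 2 ^ d * m)
    (c : Fin n → Fin d → Bool) (hbal : Balanced n d m c) :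
    -- λ_{d,1} < λ_{d,2} < … < λ_{d,d} < 0 < λ_{d,0}
    (∀ q, 1 ≤ q → q < d → lamB d p q < lamB d p (q + 1))
    ∧ lamB d p d < 0 ∧ 0 < lamB d p 0
    -- |λ_{d,1}| > |λ_{d,q}| for every 2 ≤ q ≤ d
    ∧ (∀ q, 2 ≤ q → q ≤ d → |lamB d p q| < |lamB d p 1|)
    -- so m λ_{d,1} is the eigenvalue of P̃ of second largest absolute value
    ∧ IsSecondAbsEigenval (Ptil n d p c) ((m : ℝ) * lamB d p 1)
    -- and in the scaling parametrization:
    ∧ ∀ (ρ : ℝ) (a : ℕ → ℝ), 0 < ρ → (∀ r ≤ d, p r = ρ * a r) → a 0 = 1 →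
        |(m : ℝ) * lamB d p 1|
            = (m : ℝ) * |1 + (∑ r ∈ Finset.Icc 1 (d - 1), 2 ^ (r - 1) * a r)
                - 2 ^ (d - 1) * a d| * ρ
        ∧ (n : ℝ) * ρ * (a d - a (d - 1)) / 2 ≤ |(m : ℝ) * lamB d p 1| := by
  -- monotonicity of p
  have pmono : ∀ r s, r ≤ s → s ≤ d → p r ≤ p s := by
    intro r s hrs
    induction s, hrs using Nat.le_induction with
    | base => intro _; exact le_refl _
    | succ k hk ih => intro hkd; exact le_trans (ih (by omega)) (le_of_lt (hdis k (by omega)))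
  have pnonneg : ∀ r, r ≤ d → 0 ≤ p r :=
    fun r h => le_trans (hp 0 (by omega)).1 (pmono 0 r (by omega) h)
  have ppos : ∀ r, 1 ≤ r → r ≤ d → 0 < p r := fun r h1 h2 =>
    lt_of_lt_of_le (lt_of_le_of_lt (hp 0 (by omega)).1 (hdis 0 (by omega))) (pmono 1 r h1 h2)
  -- part 1
  have part1 : ∀ q, 1 ≤ q → q < d → lamB d p q < lamB d p (q + 1) := by
    intro q h1 h2
    obtain ⟨k, hk⟩ : ∃ k, d - q = k + 1 := ⟨d - q - 1, by omega⟩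
    rw [lamB_pos _ _ (by omega), lamB_pos _ _ (by omega), hk, show d - (q+1) = k by omega,
      Finset.sum_Icc_succ_top (by omega), Nat.add_sub_cancel]
    have hpk : p (k+1) < p (k+2) := hdis (k+1) (by omega)
    have hpow : (0:ℝ) < 2^(k+1) := by positivity
    have hmul : (2:ℝ)^(k+1) * p (k+1) < 2^(k+1) * p (k+2) :=
      mul_lt_mul_of_pos_left hpk hpow
    have hmul2 : (2:ℝ)^(k+1) * p (k+1) = 2^k * p (k+1) + 2^k * p (k+1) := by
      rw [pow_succ]; ring
    linarith
  have mono : ∀ q q', 1 ≤ q → q ≤ q' → q' ≤ d → lamB d p q ≤ lamB d p q' := by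
    intro q q' h1 hqq'
    induction q', hqq' using Nat.le_induction with
    | base => intro _; exact le_refl _
    | succ k hk ih =>
        intro hkd
        exact le_trans (ih (by omega)) (le_of_lt (part1 k (by omega) (by omega)))
  have part2 : lamB d p d < 0 := by
    rw [lamB_pos _ _ (by omega), Nat.sub_self]
    have := hdis 0 (by omega)
    simp only [Finset.Icc_eq_empty_of_lt (by omega : (0:ℕ) < 1), Finset.sum_empty, pow_zero]
    linarith
  have part3 : 0 < lamB d p 0 := by
    rw [lamB_zero]
    have hsum : 0 < ∑ r ∈ Finset.Icc 1 d, (2:ℝ)^(r-1) * p r := by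
      apply Finset.sum_pos
      · intro r hr
        have hr' := Finset.mem_Icc.mp hr
        exact mul_pos (by positivity) (ppos r hr'.1 hr'.2)
      · exact Finset.nonempty_Icc.mpr hd
    linarith [(hp 0 (by omega)).1]
  have lamneg : ∀ q, 1 ≤ q → q ≤ d → lamB d p q < 0 := fun q h1 h2 =>
    lt_of_le_of_lt (mono q d h1 h2 le_rfl) part2
  have habs1 : |lamB d p 1| = -(lamB d p 1) := abs_of_neg (lamneg 1 le_rfl hd)
  have part4 : ∀ q, 2 ≤ q → q ≤ d → |lamB d p q| < |lamB d p 1| := by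
    intro q h2 hq
    rw [abs_of_neg (lamneg q (by omega) hq), habs1]
    have ha : lamB d p 1 < lamB d p 2 := part1 1 le_rfl (by omega)
    have hb := mono 2 q (by omega) h2 hq
    linarith
  have hsum01 : -(lamB d p 1) ≤ lamB d p 0 := by
    obtain ⟨e, rfl⟩ : ∃ e, d = e + 1 := ⟨d - 1, by omega⟩
    rw [lamB_zero, lamB_pos _ _ one_ne_zero, Nat.add_sub_cancel,
      Finset.sum_Icc_succ_top (by omega), Nat.add_sub_cancel]
    have h0 : 0 ≤ p 0 := (hp 0 (by omega)).1
    have hsge : 0 ≤ ∑ r ∈ Finset.Icc 1 e, (2:ℝ)^(r-1) * p r := by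
      apply Finset.sum_nonneg
      intro r hr
      have := (Finset.mem_Icc.mp hr).2
      exact mul_nonneg (by positivity) (pnonneg r (by omega))
    linarith
  -- spectrum of Ptil
  have hm0 : (0:ℝ) ≤ (m:ℝ) := Nat.cast_nonneg m
  have hBA : (Zmat n d c)ᵀ * (Zmat n d c * Bmat d p) = Bmat d (fun r => (m:ℝ) * p r) := by
    rw [← Matrix.mul_assoc, ZtZ n d m c hbal, Matrix.smul_mul, Matrix.one_mul, smul_Bmat]
  have hcardK : Fintype.card (Fin d → Bool) = 2^d := by
    simp [Fintype.card_fun]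
  have hkey := charpoly_mul_comm_rect (Zmat n d c * Bmat d p) (Zmat n d c)ᵀ
  rw [hBA, hcardK, Fintype.card_fin] at hkey
  have hPtileq : (Ptil n d p c) = (Zmat n d c * Bmat d p) * (Zmat n d c)ᵀ := rfl
  set T : Multiset ℝ :=
    ∑ q ∈ Finset.Icc 1 d, Multiset.replicate (2^(q-1)) ((m:ℝ) * lamB d p q) with hT
  have hroots2 : (Bmat d (fun r => (m:ℝ) * p r)).charpoly.roots
      = ((m:ℝ) * lamB d p 0) ::ₘ T := by
    rw [roots_charpoly_Bmat]
    simp only [lamB_smul]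
    rw [hT]
  have hKle : 2^d ≤ n := by
    rw [hn]; exact Nat.le_mul_of_pos_right _ hm
  have hrootsP : (Ptil n d p c).charpoly.roots
      = ((m:ℝ) * lamB d p 0) ::ₘ (Multiset.replicate (n - 2^d) 0 + T) := by
    have hne1 : ((Zmat n d c * Bmat d p) * (Zmat n d c)ᵀ).charpoly ≠ 0 :=
      (Matrix.charpoly_monic _).ne_zero
    have hne2 : (X^(2^d) : ℝ[X]) ≠ 0 := pow_ne_zero _ X_ne_zero
    have hne3 : ((X:ℝ[X])^n) ≠ 0 := pow_ne_zero _ X_ne_zero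
    have hne4 : (Bmat d (fun r => (m:ℝ) * p r)).charpoly ≠ 0 :=
      (Matrix.charpoly_monic _).ne_zero
    have h5 := congrArg Polynomial.roots hkey
    rw [Polynomial.roots_mul (mul_ne_zero hne1 hne2),
      Polynomial.roots_mul (mul_ne_zero hne3 hne4),
      Polynomial.roots_pow, Polynomial.roots_pow, Polynomial.roots_X,
      Multiset.nsmul_singleton, Multiset.nsmul_singleton, hroots2] at h5
    have h6 : Multiset.replicate n (0:ℝ)
        = Multiset.replicate (n - 2^d) 0 + Multiset.replicate (2^d) 0 := by
      rw [← Multiset.replicate_add]; congr 1; omega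
    rw [h6] at h5
    have h7 : Multiset.replicate (n - 2^d) (0:ℝ) + Multiset.replicate (2^d) 0
        + ((m:ℝ) * lamB d p 0) ::ₘ T
        = (((m:ℝ) * lamB d p 0) ::ₘ (Multiset.replicate (n - 2^d) 0 + T))
          + Multiset.replicate (2^d) 0 := by
      rw [Multiset.add_cons]
      rw [show Multiset.replicate (n - 2^d) (0:ℝ) + Multiset.replicate (2^d) 0 + T
        = Multiset.replicate (n - 2^d) 0 + T + Multiset.replicate (2^d) 0 by
          rw [add_right_comm]]
      rw [Multiset.cons_add]
    rw [h7] at h5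
    have := add_right_cancel h5
    rw [hPtileq]
    exact this
  -- members of T
  have hTmem : ∀ ν ∈ T, ∃ q, 1 ≤ q ∧ q ≤ d ∧ ν = (m:ℝ) * lamB d p q := by
    intro ν hν
    rw [hT] at hν
    obtain ⟨q, hq, hνq⟩ := Multiset.mem_sum.mp hν
    have hq' := Finset.mem_Icc.mp hq
    exact ⟨q, hq'.1, hq'.2, (Multiset.eq_of_mem_replicate hνq)⟩
  have habs0 : |(m:ℝ) * lamB d p 0| = (m:ℝ) * lamB d p 0 := by
    rw [abs_of_nonneg (mul_nonneg hm0 (le_of_lt part3))]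
  have habsm1 : |(m:ℝ) * lamB d p 1| = (m:ℝ) * (-(lamB d p 1)) := by
    rw [abs_mul, abs_of_nonneg hm0, habs1]
  have hboundT : ∀ ν ∈ T, |ν| ≤ (m:ℝ) * (-(lamB d p 1)) := by
    intro ν hν
    obtain ⟨q, hq1, hq2, rfl⟩ := hTmem ν hν
    rw [abs_mul, abs_of_nonneg hm0, abs_of_neg (lamneg q hq1 hq2)]
    have := mono 1 q le_rfl hq1 hq2
    nlinarith
  have part5 : IsSecondAbsEigenval (Ptil n d p c) ((m : ℝ) * lamB d p 1) := by
    refine ⟨(m:ℝ) * lamB d p 0, ?_, ?_, ?_, ?_⟩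
    · rw [hrootsP]; exact Multiset.mem_cons_self _ _
    · intro ν hν
      rw [hrootsP] at hν
      rcases Multiset.mem_cons.mp hν with rfl | hν'
      · exact le_refl _
      · rcases Multiset.mem_add.mp hν' with h0 | hT'
        · rw [Multiset.eq_of_mem_replicate h0, abs_zero, habs0]
          exact mul_nonneg hm0 (le_of_lt part3)
        · rw [habs0]
          calc |ν| ≤ (m:ℝ) * (-(lamB d p 1)) := hboundT ν hT'
            _ ≤ (m:ℝ) * lamB d p 0 := by nlinarith
    · rw [hrootsP, Multiset.erase_cons_head]
      apply Multiset.mem_add.mpr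
      right
      rw [hT]
      apply Multiset.mem_sum.mpr
      exact ⟨1, Finset.mem_Icc.mpr ⟨le_rfl, hd⟩, by
        rw [Multiset.mem_replicate]
        exact ⟨by positivity, rfl⟩⟩
    · intro ν hν
      rw [hrootsP, Multiset.erase_cons_head] at hν
      rw [habsm1]
      rcases Multiset.mem_add.mp hν with h0 | hT'
      · rw [Multiset.eq_of_mem_replicate h0, abs_zero]
        have : 0 < -(lamB d p 1) := by linarith [lamneg 1 le_rfl hd]
        positivity
      · exact hboundT ν hT'
  refine ⟨part1, part2, part3, part4, part5, ?_⟩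
  intro ρ a hρ hpa ha0
  have hl1 : lamB d p 1 = ρ * (1 + (∑ r ∈ Finset.Icc 1 (d-1), 2^(r-1) * a r)
      - 2^(d-1) * a d) := by
    rw [lamB_pos _ _ one_ne_zero, show d - 1 + 1 = d by omega]
    rw [hpa 0 (by omega), hpa d le_rfl, ha0]
    rw [Finset.sum_congr rfl (fun r hr => by
      rw [hpa r (by
        have := (Finset.mem_Icc.mp hr).2; omega)])]
    have hsr : ∑ r ∈ Finset.Icc 1 (d-1), (2:ℝ)^(r-1) * (ρ * a r)
        = ρ * ∑ r ∈ Finset.Icc 1 (d-1), (2:ℝ)^(r-1) * a r := by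
      rw [Finset.mul_sum]; exact Finset.sum_congr rfl fun r _ => by ring
    rw [hsr]
    ring
  constructor
  · rw [hl1, abs_mul, abs_mul, abs_of_pos hρ, abs_of_nonneg hm0]
    ring
  · rw [habsm1]
    have hS : ∑ r ∈ Finset.Icc 1 (d-1), (2:ℝ)^(r-1)*p r
        ≤ ∑ r ∈ Finset.Icc 1 (d-1), (2:ℝ)^(r-1) * p (d-1) := by
      apply Finset.sum_le_sum
      intro r hr
      exact mul_le_mul_of_nonneg_left
        (pmono r (d-1) (by have := (Finset.mem_Icc.mp hr).2; omega) (by omega)) (by positivity)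
    have hgeom : ∑ r ∈ Finset.Icc 1 (d-1), (2:ℝ)^(r-1) * p (d-1)
        = (2^(d-1) - 1) * p (d-1) := by rw [← Finset.sum_mul, sum_geom]
    have hp0 : p 0 ≤ p (d-1) := pmono 0 (d-1) (by omega) (by omega)
    have hbound : p 0 + (∑ r ∈ Finset.Icc 1 (d-1), (2:ℝ)^(r-1)*p r)
        ≤ 2^(d-1) * p (d-1) := by
      have hexp : ((2:ℝ)^(d-1) - 1) * p (d-1) = 2^(d-1)*p (d-1) - p (d-1) := by ring
      linarith
    have hl1' : lamB d p 1 = p 0 + (∑ r ∈ Finset.Icc 1 (d-1), (2:ℝ)^(r-1)*p r)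
        - 2^(d-1)*p d := by
      rw [lamB_pos _ _ one_ne_zero, show d - 1 + 1 = d by omega]
    have h1 : (n:ℝ) * ρ * (a d - a (d-1)) / 2 = (2:ℝ)^(d-1) * (m:ℝ) * (p d - p (d-1)) := by
      rw [hn, hpa d le_rfl, hpa (d-1) (by omega)]
      push_cast
      have h2d : (2:ℝ)^d = 2^(d-1) * 2 := by
        rw [← pow_succ, show d - 1 + 1 = d by omega]
      rw [h2d]
      ring
    rw [h1, hl1']
    have key : (2:ℝ)^(d-1) * (p d - p (d-1))
        ≤ -(p 0 + (∑ r ∈ Finset.Icc 1 (d-1), (2:ℝ)^(r-1)*p r) - 2^(d-1)*p d) := by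
      nlinarith [hbound]
    calc (2:ℝ)^(d-1) * (m:ℝ) * (p d - p (d-1))
        = (m:ℝ) * ((2:ℝ)^(d-1) * (p d - p (d-1))) := by ring
      _ ≤ (m:ℝ) * (-(p 0 + (∑ r ∈ Finset.Icc 1 (d-1), (2:ℝ)^(r-1)*p r) - 2^(d-1)*p d)) :=
          mul_le_mul_of_nonneg_left key hm0

end BTSBM
end
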